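/- arXiv:1808.06721 — 10 statements merged into one kernel-verified Lean document; each statement's English description precedes it below -/
import Mathlib

section
/- A 0/1 matrix with the consecutive ones property (in each row, all 1 entries appear consecutively) is totally unimodular: every square submatrix has determinant 0, 1, or -1. -/
/-!
Sorting the chosen columns changes the determinant only by a sign and keeps the ones of each
row consecutive. Subtracting from each column its right neighbour, a column operation of
determinant `1`, then leaves every row with at most one `1` and at most one `-1`. For such a
matrix `|det| ≤ 1` by induction on the size: if every row contains both a `1` and a `-1`, the
rows sum to zero and the determinant vanishes; otherwise some row has at most one nonzero
entry and Laplace expansion along it reduces the size.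
-/

open Matrix Finset

theorem sum_eq_zero_of_injOn_support {ι : Type*} [Fintype ι] {v : ι → ℤ}
    (hv : ∀ j, |v j| ≤ 1) (hinj : Set.InjOn v (Function.support v))
    {p q : ι} (hp : v p ≠ 0) (hq : v q ≠ 0) (hpq : p ≠ q) : ∑ j, v j = 0 := by
  have hne : v p ≠ v q := fun h => hpq (hinj hp hq h)
  have hvp := abs_le.mp (hv p)
  have hvq := abs_le.mp (hv q)
  rw [Finset.sum_eq_add p q hpq (fun j _ ⟨hjp, hjq⟩ => ?_) (by simp) (by simp)]
  · omega
  by_contra hj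
  have hvj := abs_le.mp (hv j)
  -- the nonzero values are `±1`, and `v p`, `v q` already take both of them
  rcases (by omega : v j = v p ∨ v j = v q) with h | h
  exacts [hjp (hinj hj hp h), hjq (hinj hj hq h)]

/-- For entries in `{-1, 0, 1}`, injectivity on the support says that each row has at most one
`1` and at most one `-1`. -/
theorem abs_det_le_one_of_injOn_support :
    ∀ {r : ℕ} (B : Matrix (Fin r) (Fin r) ℤ), (∀ i j, |B i j| ≤ 1) →
      (∀ i, Set.InjOn (B i) (Function.support (B i))) → |B.det| ≤ 1
  | 0, B, _, _ => by simp
  | r + 1, B, hB, hinj => by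
    by_cases hsingle : ∃ i j₀, ∀ j ≠ j₀, B i j = 0
    · obtain ⟨i, j₀, hzero⟩ := hsingle
      have hminor := abs_det_le_one_of_injOn_support (B.submatrix i.succAbove j₀.succAbove)
        (fun _ _ => hB _ _)
        (fun _ _ ha _ hb hab => Fin.succAbove_right_injective (hinj _ ha hb hab))
      rw [det_succ_row B i, Finset.sum_eq_single j₀ (fun j _ hj => by simp [hzero j hj])
        (by simp), abs_mul, abs_mul, abs_pow, abs_neg, abs_one, one_pow, one_mul]
      exact mul_le_one₀ (hB i j₀) (abs_nonneg _) hminor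
    · push Not at hsingle
      have hsum : ∀ i, ∑ j, B i j = 0 := fun i => by
        obtain ⟨p, -, hp⟩ := hsingle i 0
        obtain ⟨q, hqp, hq⟩ := hsingle i p
        exact sum_eq_zero_of_injOn_support (hB i) (hinj i) hp hq hqp.symm
      have hker : B *ᵥ (fun _ => 1) = 0 := funext fun i => by simp [mulVec, dotProduct, hsum i]
      rw [exists_mulVec_eq_zero_iff.mp ⟨_, fun h => one_ne_zero (congr_fun h 0), hker⟩,
        abs_zero]
      exact zero_le_one

theorem injOn_support_sub_succ {u : ℕ → ℤ} (h01 : ∀ t, u t = 0 ∨ u t = 1)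
    (hconn : (u ⁻¹' {1}).OrdConnected) :
    Set.InjOn (fun t => u t - u (t + 1)) (Function.support fun t => u t - u (t + 1)) := by
  intro a ha b hb hab
  simp only [Function.mem_support] at ha hb hab
  wlog hlt : a < b generalizing a b
  · rcases lt_or_eq_of_le (not_lt.mp hlt) with h | h
    exacts [(this hab.symm hb ha h).symm, h.symm]
  -- equal nonzero steps at `a < b` would leave a gap inside the interval of ones
  have hdown : u a = 1 → u b = 1 → u (a + 1) = 1 :=
    fun h h' => hconn.out h h' ⟨by omega, by omega⟩
  have hup : u (a + 1) = 1 → u (b + 1) = 1 → u b = 1 :=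
    fun h h' => hconn.out h h' ⟨by omega, by omega⟩
  have := h01 a; have := h01 (a + 1); have := h01 b; have := h01 (b + 1)
  omega

theorem extend_val_apply {α : Type*} [Zero α] {r : ℕ} (v : Fin r → α) (t : ℕ) :
    Function.extend Fin.val v 0 t = if h : t < r then v ⟨t, h⟩ else 0 := by
  split_ifs with h
  · exact Fin.val_injective.extend_apply v 0 ⟨t, h⟩
  · exact Function.extend_apply' _ _ _ fun ⟨k, hk⟩ => h (hk ▸ k.isLt)

theorem ordConnected_extend_val_preimage_one {r : ℕ} {v : Fin r → ℤ}
    (hv : (v ⁻¹' {1}).OrdConnected) :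
    (Function.extend Fin.val v 0 ⁻¹' {1}).OrdConnected := by
  refine ⟨fun a ha c hc b ⟨hab, hbc⟩ => ?_⟩
  simp only [Set.mem_preimage, Set.mem_singleton_iff, extend_val_apply] at ha hc ⊢
  split_ifs at ha hc with har hcr
  · rw [dif_pos (by omega)]
    exact hv.out ha hc ⟨Fin.mk_le_mk.mpr hab, Fin.mk_le_mk.mpr hbc⟩
  all_goals simp at ha hc

def subdiagShift (r : ℕ) : Matrix (Fin r) (Fin r) ℤ :=
  of fun j k => if (j : ℕ) = k + 1 then 1 else 0

theorem det_one_sub_subdiagShift (r : ℕ) : (1 - subdiagShift r).det = 1 := by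
  rw [det_of_isLowerTriangular]
  · simp [subdiagShift]
  · intro j k hjk
    have : (j : ℕ) < k := hjk
    simp only [subdiagShift, Matrix.sub_apply, one_apply, Fin.ext_iff, of_apply]
    omega

theorem mul_subdiagShift_apply {r : ℕ} (B : Matrix (Fin r) (Fin r) ℤ) (i k : Fin r) :
    (B * subdiagShift r) i k = Function.extend Fin.val (B i) 0 (k + 1) := by
  rw [extend_val_apply, mul_apply]
  split_ifs with h
  · refine (Finset.sum_eq_single ⟨k + 1, h⟩ (fun j _ hj => ?_) (by simp)).trans
      (by simp [subdiagShift])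
    simp only [ne_eq, Fin.ext_iff, subdiagShift, of_apply, mul_ite, mul_one, mul_zero,
      ite_eq_right_iff] at hj ⊢
    omega
  · refine Finset.sum_eq_zero fun j _ => ?_
    simp only [subdiagShift, of_apply, mul_ite, mul_one, mul_zero, ite_eq_right_iff]
    omega

theorem abs_det_le_one_of_ordConnected {r : ℕ} (B : Matrix (Fin r) (Fin r) ℤ)
    (h01 : ∀ i j, B i j = 0 ∨ B i j = 1) (hconn : ∀ i, (B i ⁻¹' {1}).OrdConnected) :
    |B.det| ≤ 1 := by
  set u : Fin r → ℕ → ℤ := fun i => Function.extend Fin.val (B i) 0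
  have hu01 (i : Fin r) (t : ℕ) : u i t = 0 ∨ u i t = 1 := by
    simp only [u, extend_val_apply]
    split_ifs
    exacts [h01 _ _, Or.inl rfl]
  -- a row whose ones fill `[s, t]` becomes a `1` at `t` and, if `s > 0`, a `-1` at `s - 1`
  have hdiff (i : Fin r) : (B * (1 - subdiagShift r)) i = fun k : Fin r => u i k - u i (k + 1) := by
    ext k
    rw [Matrix.mul_sub, mul_one, Matrix.sub_apply, mul_subdiagShift_apply]
    simp only [u, Fin.val_injective.extend_apply]
  rw [show B.det = (B * (1 - subdiagShift r)).det by
    rw [det_mul, det_one_sub_subdiagShift, mul_one]]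
  refine abs_det_le_one_of_injOn_support _ (fun i k => ?_) (fun i => ?_)
  · rw [hdiff]
    rcases hu01 i k with h | h <;> rcases hu01 i (k + 1) with h' | h' <;> simp [h, h']
  · rw [hdiff]
    exact (injOn_support_sub_succ (hu01 i) (ordConnected_extend_val_preimage_one (hconn i))).comp
      Fin.val_injective.injOn fun _ hk => hk

/-- A 0/1 matrix with the consecutive ones property (in each row, all 1 entries appear
consecutively) is totally unimodular: every square submatrix has determinant 0, 1, or -1. -/
theorem consecutive_ones_totally_unimodular
    {m n : ℕ} (A : Matrix (Fin m) (Fin n) ℤ)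
    (h01 : ∀ i j, A i j = 0 ∨ A i j = 1)
    (hconsec : ∀ (i : Fin m) (j k l : Fin n), j ≤ k → k ≤ l → A i j = 1 → A i l = 1 → A i k = 1) :
    ∀ (r : ℕ) (f : Fin r → Fin m) (g : Fin r → Fin n),
      (A.submatrix f g).det = 0 ∨ (A.submatrix f g).det = 1 ∨ (A.submatrix f g).det = -1 := by
  intro r f g
  set σ := Tuple.sort g
  have hsorted : |(A.submatrix f (g ∘ σ)).det| ≤ 1 :=
    abs_det_le_one_of_ordConnected _ (fun _ _ => h01 _ _) fun i =>
      Set.OrdConnected.preimage_mono (f := g ∘ σ)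
        ⟨fun j hj l hl k hk => hconsec (f i) j k l hk.1 hk.2 hj hl⟩ (Tuple.monotone_sort g)
  have hperm : (A.submatrix f (g ∘ σ)).det = Equiv.Perm.sign σ * (A.submatrix f g).det :=
    det_permute' σ (A.submatrix f g)
  rw [hperm, abs_mul, Int.isUnit_iff_abs_eq.mp (Equiv.Perm.sign σ).isUnit, one_mul] at hsorted
  have := abs_le.mp hsorted
  omega
end

section
/- For every integer vector v ∈ ℤ^k in the kernel of the matrix A whose columns are s_1,…,s_{2n} as above (i.e., Σ v_i s_i = 0), v is an integer linear combination of the vectors e_i + e_{n+j} − e_j − e_{n+i} for 1 ≤ i < j ≤ n. Equivalently, the toric ideal I of the homogeneous star code is generated by the binomials t_i t_{n+j} − t_j t_{n+i}, 1 ≤ i < j ≤ n. -/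
/-- The `i`-th codeword (1-based, `1 ≤ i ≤ 2n`) of the homogeneous star code `S_n`. -/
def starCodeword (n i : ℕ) : Fin (n + 1) → ℤ := fun j =>
  if i < n then
    (if (j : ℕ) = 0 then 1 else 0) + (if (j : ℕ) = i then 1 else 0) +
      (if (j : ℕ) = n then 1 else 0)
  else if i = n then (if (j : ℕ) = 0 then 1 else 0) + (if (j : ℕ) = n then 1 else 0)
  else if i < 2 * n then (if (j : ℕ) = i - n then 1 else 0) + (if (j : ℕ) = n then 1 else 0)
  else (if (j : ℕ) = n then 1 else 0)

/-!
Write `v = (x, y)` with `x, y ∈ ℤⁿ` its two halves. Since `s_i = e_1 + s_{n+i}` for `i ≤ n`, the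
kernel equations say `∑ x = 0` (coordinate `1`), `x_i + y_i = 0` for `i < n` (coordinate
`i + 1`), and `∑ (x + y) = 0` (coordinate `n + 1`), which supplies the missing `x_n + y_n = 0`.
So `v = ∑ x_i (e_i - e_{n+i})` with `∑ x_i = 0`, a combination of the differences
`(e_i - e_{n+i}) - (e_j - e_{n+j})`, which are the generators up to sign.
-/

theorem Submodule.sum_smul_mem_of_sum_eq_zero {ι R M : Type*} [Fintype ι] [Ring R]
    [AddCommGroup M] [Module R M] (p : Submodule R M) (c : ι → R) (d : ι → M)
    (hc : ∑ i, c i = 0) (hd : ∀ i j, d i - d j ∈ p) : ∑ i, c i • d i ∈ p := by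
  cases isEmpty_or_nonempty ι with
  | inl _ => simp
  | inr h =>
    obtain ⟨j⟩ := h
    have : ∑ i, c i • d i = ∑ i, c i • (d i - d j) := by
      simp only [smul_sub, Finset.sum_sub_distrib, ← Finset.sum_smul, hc, zero_smul, sub_zero]
    rw [this]
    exact p.sum_mem fun i _ => p.smul_mem _ (hd i j)

namespace StarCode

variable {n : ℕ}

-- Indices are 0-based: `low k` and `high k` carry the codewords `s_{k+1}` and `s_{n+k+1}`.
def low (k : Fin n) : Fin (2 * n) := ⟨k, by omega⟩

def high (k : Fin n) : Fin (2 * n) := ⟨n + k, by omega⟩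

theorem sum_univ_eq_sum_low_add_high {M : Type*} [AddCommMonoid M] (f : Fin (2 * n) → M) :
    ∑ a, f a = ∑ k : Fin n, (f (low k) + f (high k)) := by
  rw [← Fin.sum_congr' f (two_mul n).symm, Fin.sum_univ_add, ← Finset.sum_add_distrib]
  rfl

theorem starCodeword_succ {k : ℕ} (hk : k < n) :
    starCodeword n (k + 1) = Pi.single 0 1 + starCodeword n (n + k + 1) := by
  funext c
  simp only [starCodeword, Pi.add_apply, Pi.single_apply, Fin.ext_iff, Fin.val_zero]
  split_ifs <;> omega

theorem starCodeword_add_succ_apply_zero (hn : 0 < n) (k : ℕ) :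
    starCodeword n (n + k + 1) 0 = 0 := by
  simp only [starCodeword, Fin.val_zero]
  split_ifs <;> omega

theorem starCodeword_add_succ_apply_last (k : ℕ) :
    starCodeword n (n + k + 1) (Fin.last n) = 1 := by
  simp only [starCodeword, Fin.val_last]
  split_ifs <;> omega

theorem starCodeword_add_succ_apply_succ (k : ℕ) {m : ℕ} (hm : m + 1 < n) :
    starCodeword n (n + k + 1) ⟨m + 1, by omega⟩ = if k = m then 1 else 0 := by
  simp only [starCodeword]
  split_ifs <;> omega

section Kernel

variable {v : Fin (2 * n) → ℤ}

theorem kernel_eq_low_high (hv : ∑ a : Fin (2 * n), v a • starCodeword n ((a : ℕ) + 1) = 0) :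
    (∑ k, v (low k)) • Pi.single 0 1 +
      ∑ k : Fin n, (v (low k) + v (high k)) • starCodeword n (n + k + 1) = 0 := by
  rw [sum_univ_eq_sum_low_add_high] at hv
  simp only [low, high, starCodeword_succ (Fin.is_lt _), smul_add, add_smul,
    Finset.sum_add_distrib, Finset.sum_smul] at hv ⊢
  rw [← hv]
  abel

theorem sum_low_eq_zero (hv : ∑ a : Fin (2 * n), v a • starCodeword n ((a : ℕ) + 1) = 0) :
    ∑ k, v (low k) = 0 := by
  rcases Nat.eq_zero_or_pos n with rfl | hn
  · simp
  simpa [starCodeword_add_succ_apply_zero hn] using congrFun (kernel_eq_low_high hv) 0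

theorem high_eq_neg_low (hv : ∑ a : Fin (2 * n), v a • starCodeword n ((a : ℕ) + 1) = 0)
    (k : Fin n) : v (high k) = -v (low k) := by
  have hlast : ∑ k : Fin n, (v (low k) + v (high k)) = 0 := by
    simpa [starCodeword_add_succ_apply_last, sum_low_eq_zero hv]
      using congrFun (kernel_eq_low_high hv) (Fin.last n)
  have hsucc (m : Fin n) (hm : (m : ℕ) + 1 < n) : v (low m) + v (high m) = 0 := by
    simpa [starCodeword_add_succ_apply_succ _ hm, Fin.val_inj]
      using congrFun (kernel_eq_low_high hv) ⟨m + 1, by omega⟩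
  suffices v (low k) + v (high k) = 0 by linarith
  by_cases hk : (k : ℕ) + 1 < n
  · exact hsucc k hk
  rw [← hlast, Finset.sum_eq_single k (fun j _ hjk => hsucc j ?_) (by simp)]
  have := Fin.val_ne_of_ne hjk
  omega

end Kernel

theorem eq_sum_smul_single_low_sub_single_high {v : Fin (2 * n) → ℤ}
    (h : ∀ k, v (high k) = -v (low k)) :
    v = ∑ k, v (low k) • (Pi.single (low k) 1 - Pi.single (high k) 1) := by
  conv_lhs => rw [pi_eq_sum_univ' v, sum_univ_eq_sum_low_add_high]
  simp only [h, neg_smul, ← sub_eq_add_neg, smul_sub]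

-- The exponent vectors of the binomials `t_i t_{n+j} - t_j t_{n+i}`, shifted to 0-based indices.
def moves (n : ℕ) : Set (Fin (2 * n) → ℤ) :=
  {w | ∃ i j : Fin n, i < j ∧
    w = Pi.single (low i) 1 + Pi.single (high j) 1 - Pi.single (low j) 1 - Pi.single (high i) 1}

theorem single_low_sub_single_high_sub_mem_span_moves (k l : Fin n) :
    (Pi.single (low k) 1 - Pi.single (high k) 1) - (Pi.single (low l) 1 - Pi.single (high l) 1)
      ∈ Submodule.span ℤ (moves n) := by
  have mem_moves {k l : Fin n} (hkl : k < l) :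
      (Pi.single (low k) 1 - Pi.single (high k) 1) - (Pi.single (low l) 1 - Pi.single (high l) 1)
        ∈ moves n :=
    ⟨k, l, hkl, by abel⟩
  rcases lt_trichotomy k l with hkl | rfl | hlk
  · exact Submodule.subset_span (mem_moves hkl)
  · simp
  · rw [← neg_sub]
    exact neg_mem (Submodule.subset_span (mem_moves hlk))

theorem mem_span_moves {v : Fin (2 * n) → ℤ}
    (hv : ∑ a : Fin (2 * n), v a • starCodeword n ((a : ℕ) + 1) = 0) :
    v ∈ Submodule.span ℤ (moves n) := by
  rw [eq_sum_smul_single_low_sub_single_high (high_eq_neg_low hv)]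
  exact Submodule.sum_smul_mem_of_sum_eq_zero _ _ _ (sum_low_eq_zero hv)
    single_low_sub_single_high_sub_mem_span_moves

end StarCode

/-- Every integer vector in the kernel of the star code matrix is an integer linear
combination of the vectors `e_i + e_{n+j} − e_j − e_{n+i}` for `1 ≤ i < j ≤ n`;
equivalently the toric ideal of `S_n` is generated by the binomials `t_i t_{n+j} − t_j t_{n+i}`. -/
theorem star_code_kernel_generated {n : ℕ} (v : Fin (2 * n) → ℤ)
    (hv : ∑ a : Fin (2 * n), v a • starCodeword n ((a : ℕ) + 1) = 0) :
    v ∈ Submodule.span ℤ {w : Fin (2 * n) → ℤ |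
      ∃ (i j : ℕ) (h1 : 1 ≤ i) (h2 : i < j) (h3 : j ≤ n),
        w = Pi.single (⟨i - 1, by omega⟩ : Fin (2 * n)) 1
          + Pi.single (⟨n + j - 1, by omega⟩ : Fin (2 * n)) 1
          - Pi.single (⟨j - 1, by omega⟩ : Fin (2 * n)) 1
          - Pi.single (⟨n + i - 1, by omega⟩ : Fin (2 * n)) 1} := by
  refine Submodule.span_mono ?_ (StarCode.mem_span_moves hv)
  rintro _ ⟨i, j, hij, rfl⟩
  exact ⟨i + 1, j + 1, by omega, by simpa using hij, by omega, rfl⟩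
end

section
/- The permutohedron Π_n equals the translate by (1,…,1) of the Minkowski sum of the line segments [e_i, e_j] over all pairs 1 ≤ i < j ≤ n; that is, Π_n = {(1,…,1)} + Σ_{1≤i<j≤n} [e_i, e_j]. -/
/-!
A permutation vertex `(π(1) + 1, …, π(n) + 1)` is `(1,…,1) + Σ_{i<j} e_m`, where `m` is whichever
of `i, j` the permutation ranks higher: coordinate `k` then counts the `l` with `π l < π k`. So the
vertices lie in the (convex) zonotope, giving `⊆`. Conversely, a linear functional `f` is at most
`max (f e_i) (f e_j)` on `[e_i, e_j]`, and for a permutation `π` sorting the values `f e_k` this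
maximum is `f e_m`. Hence `f` is maximised over the zonotope at a vertex of `Π_n`, and a separating
hyperplane rules out points of the zonotope outside `Π_n`.
-/

open Pointwise

/-- The permutohedron `Π_n`. -/
def permutohedron (n : ℕ) : Set (Fin n → ℝ) :=
  convexHull ℝ {x | ∃ π : Equiv.Perm (Fin n), ∀ k, x k = ((π k : ℕ) : ℝ) + 1}

open Finset

lemma Equiv.Perm.card_filter_apply_lt {n : ℕ} (π : Equiv.Perm (Fin n)) (k : Fin n) :
    #{l | π l < π k} = π k := by
  rw [← Fin.card_Iio (π k), ← card_map π.toEmbedding]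
  congr 1
  ext l
  simp

namespace Permutohedron

variable {n : ℕ}

def vertex (π : Equiv.Perm (Fin n)) : Fin n → ℝ := fun k => (π k : ℝ) + 1

def pairMax (π : Equiv.Perm (Fin n)) (p : Fin n × Fin n) : Fin n :=
  if π p.1 < π p.2 then p.2 else p.1

lemma card_filter_eq_pairMax (π : Equiv.Perm (Fin n)) (k : Fin n) :
    #{p : Fin n × Fin n | p.1 < p.2 ∧ k = pairMax π p} = π k := by
  rw [← π.card_filter_apply_lt k]
  refine card_nbij' (fun p => if p.1 = k then p.2 else p.1) (fun l => (min l k, max l k))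
    ?_ ?_ ?_ ?_
  all_goals
    intro p hp
    simp only [coe_filter, mem_univ, true_and, Set.mem_ofPred_eq] at hp ⊢
    grind [pairMax, Equiv.apply_eq_iff_eq]

lemma vertex_eq_one_add_sum_single_pairMax (π : Equiv.Perm (Fin n)) :
    vertex π = (fun _ => 1) + ∑ p ∈ univ.filter (fun p : Fin n × Fin n => p.1 < p.2),
      Pi.single (pairMax π p) 1 := by
  ext k
  simp only [vertex, Pi.add_apply, Finset.sum_apply, Pi.single_apply, sum_boole, filter_filter,
    card_filter_eq_pairMax]
  ring

lemma max_eq_apply_pairMax {α : Type*} [LinearOrder α] {c : Fin n → α} {π : Equiv.Perm (Fin n)}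
    (hπ : Monotone (c ∘ π.symm)) (p : Fin n × Fin n) :
    max (c p.1) (c p.2) = c (pairMax π p) := by
  unfold pairMax
  split_ifs with h
  · simpa using hπ h.le
  · simpa using hπ (not_lt.1 h)

end Permutohedron

open Permutohedron

variable {n : ℕ}

lemma permutohedron_eq_convexHull_range_vertex :
    permutohedron n = convexHull ℝ (Set.range vertex) := by
  unfold permutohedron
  congr 1
  ext x
  simp [vertex, funext_iff, eq_comm]

lemma isClosed_permutohedron : IsClosed (permutohedron n) := by
  rw [permutohedron_eq_convexHull_range_vertex]
  exact ((Set.finite_range vertex).isCompact_convexHull ℝ).isClosed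

lemma vertex_mem_permutohedron (π : Equiv.Perm (Fin n)) : vertex π ∈ permutohedron n := by
  rw [permutohedron_eq_convexHull_range_vertex]
  exact subset_convexHull ℝ _ (Set.mem_range_self π)

def permZonotope (n : ℕ) : Set (Fin n → ℝ) :=
  {fun _ => 1} + ∑ p ∈ univ.filter (fun p : Fin n × Fin n => p.1 < p.2),
    segment ℝ (Pi.single p.1 1) (Pi.single p.2 1)

lemma convex_permZonotope : Convex ℝ (permZonotope n) :=
  (convex_singleton _).add (convex_sum _ fun _ _ => convex_segment _ _)

lemma vertex_mem_permZonotope (π : Equiv.Perm (Fin n)) : vertex π ∈ permZonotope n := by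
  rw [vertex_eq_one_add_sum_single_pairMax]
  refine Set.add_mem_add rfl (Set.finsetSum_mem_finsetSum _ _ _ fun p _ => ?_)
  unfold pairMax
  split_ifs
  exacts [right_mem_segment _ _ _, left_mem_segment _ _ _]

lemma exists_le_apply_vertex_of_mem_permZonotope (f : StrongDual ℝ (Fin n → ℝ))
    {x : Fin n → ℝ} (hx : x ∈ permZonotope n) : ∃ π, f x ≤ f (vertex π) := by
  obtain ⟨_, rfl, y, hy, rfl⟩ := hx
  obtain ⟨g, hg, rfl⟩ := (Set.mem_finsetSum _ _ _).1 hy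
  set c : Fin n → ℝ := fun k => f (Pi.single k 1)
  refine ⟨(Tuple.sort c).symm, ?_⟩
  have hπ : Monotone (c ∘ (Tuple.sort c).symm.symm) := Tuple.monotone_sort c
  rw [vertex_eq_one_add_sum_single_pairMax, map_add, map_add, map_sum, map_sum]
  gcongr with p hp
  calc f (g p) ≤ max (c p.1) (c p.2) :=
        (f.toLinearMap.convexOn convex_univ).le_max_of_mem_segment trivial trivial (hg hp)
    _ = c (pairMax _ p) := max_eq_apply_pairMax hπ p

lemma permutohedron_subset_permZonotope : permutohedron n ⊆ permZonotope n := by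
  rw [permutohedron_eq_convexHull_range_vertex]
  exact convexHull_min (Set.range_subset_iff.2 vertex_mem_permZonotope) convex_permZonotope

lemma permZonotope_subset_permutohedron : permZonotope n ⊆ permutohedron n := by
  intro x hx
  by_contra hx'
  obtain ⟨f, u, hf, hu⟩ :=
    geometric_hahn_banach_closed_point (convex_convexHull ℝ _) isClosed_permutohedron hx'
  obtain ⟨π, hπ⟩ := exists_le_apply_vertex_of_mem_permZonotope f hx
  linarith [hf _ (vertex_mem_permutohedron π)]

/-- `Π_n = {(1,…,1)} + Σ_{1≤i<j≤n} [e_i, e_j]` (Minkowski sum of segments, translated). -/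
theorem permutohedron_minkowski (n : ℕ) :
    permutohedron n = {fun _ => (1 : ℝ)} +
      ∑ p ∈ Finset.univ.filter (fun p : Fin n × Fin n => p.1 < p.2),
        segment ℝ (Pi.single p.1 (1 : ℝ)) (Pi.single p.2 1) :=
  permutohedron_subset_permZonotope.antisymm permZonotope_subset_permutohedron
end

section
/- The vertices of the polytope Newt(U_n) = Σ_{1≤i<j≤n} [e_i + e_{n+j}, e_j + e_{n+i}] are exactly the points (π, π^c) − (1,…,1) for π ∈ S_n, where π is regarded as the vector (π(1),…,π(n)) and π^c = (n+1−π(1),…,n+1−π(n)). -/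
/-!
A vertex of a zonotope is a sum of one endpoint per generating segment. Taking the endpoint
`e_i + e_{n+j}` of the segment of `{i, j}` means "`i` beats `j`", so the candidate vertices are
the points of tournaments on `Fin n`: the wins of `i` in coordinate `i`, its losses in coordinate
`n + i`. At a vertex the tournament has no 3-cycle `i → j → k → i`: reversing any one of its edges
stays in the zonotope, and the three displacements sum to zero, which puts the point in the
interior of a segment of the zonotope. A transitive tournament is a linear order, i.e. the
permutation `π` with `π i` the number of wins of `i`. Conversely, the point of `π` is the unique
maximiser of `y ↦ ∑ π i * y i` on the zonotope, hence a vertex.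
-/

open Pointwise

def lo {n : ℕ} (i : Fin n) : Fin (2 * n) := ⟨(i : ℕ), by have := i.isLt; omega⟩

def hi {n : ℕ} (i : Fin n) : Fin (2 * n) := ⟨n + (i : ℕ), by have := i.isLt; omega⟩

/-- The zonotope `Newt(U_n) = Σ_{1≤i<j≤n} [e_i + e_{n+j}, e_j + e_{n+i}] ⊆ ℝ^{2n}`. -/
def newtUn (n : ℕ) : Set (Fin (2 * n) → ℝ) :=
  ∑ p ∈ Finset.univ.filter (fun p : Fin n × Fin n => p.1 < p.2),
    segment ℝ (Pi.single (lo p.1) (1 : ℝ) + Pi.single (hi p.2) 1)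
      (Pi.single (lo p.2) (1 : ℝ) + Pi.single (hi p.1) 1)

open Finset

section MinkowskiSum

variable {ι E : Type*} [AddCommGroup E] {s : Finset ι} {S : ι → Set E} {f : ι → E}

theorem Set.sum_sub_add_mem_finsetSum (hf : ∀ q ∈ s, f q ∈ S q) {p : ι} (hp : p ∈ s) {y : E}
    (hy : y ∈ S p) : ∑ q ∈ s, f q - f p + y ∈ ∑ q ∈ s, S q := by
  classical
  refine (Set.mem_finsetSum _ _ _).2 ⟨Function.update f p y, fun {q} hq => ?_, ?_⟩
  · rcases eq_or_ne q p with rfl | hqp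
    · simpa using hy
    · simpa [hqp] using hf q hq
  · rw [sum_update_of_mem hp, ← add_sum_erase s f hp, sdiff_singleton_eq_erase]
    abel

variable {𝕜 : Type*} [Ring 𝕜] [PartialOrder 𝕜] [IsOrderedRing 𝕜] [Module 𝕜 E]

theorem mem_extremePoints_of_sum_mem_extremePoints
    (hx : ∑ q ∈ s, f q ∈ (∑ q ∈ s, S q).extremePoints 𝕜) (hf : ∀ q ∈ s, f q ∈ S q)
    {p : ι} (hp : p ∈ s) : f p ∈ (S p).extremePoints 𝕜 := by
  refine ⟨hf p hp, fun y hy z hz hyz => ?_⟩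
  have := hx.2 (Set.sum_sub_add_mem_finsetSum hf hp hy) (Set.sum_sub_add_mem_finsetSum hf hp hz)
    (by simpa using (mem_openSegment_translate 𝕜 (∑ q ∈ s, f q - f p)).2 hyz)
  exact add_left_cancel (this.trans (sub_add_cancel _ _).symm)

end MinkowskiSum

theorem ite_mem_segment {𝕜 E : Type*} [Semiring 𝕜] [PartialOrder 𝕜] [IsOrderedRing 𝕜]
    [AddCommMonoid E] [Module 𝕜 E] (c : Prop) [Decidable c] (a b : E) :
    (if c then a else b) ∈ segment 𝕜 a b := by
  split_ifs
  exacts [left_mem_segment 𝕜 a b, right_mem_segment 𝕜 a b]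

section ExtremePoints

variable {ι 𝕜 E : Type*} [Field 𝕜] [LinearOrder 𝕜] [IsStrictOrderedRing 𝕜] [AddCommGroup E]
  [Module 𝕜 E] {A : Set E} {x : E}

theorem eq_or_eq_of_mem_extremePoints_segment {a b : E}
    (hx : x ∈ (segment 𝕜 a b).extremePoints 𝕜) : x = a ∨ x = b := by
  by_contra! h
  exact h.1 (hx.2 (left_mem_segment 𝕜 a b) (right_mem_segment 𝕜 a b)
    (mem_openSegment_of_ne_left_right (Ne.symm h.1) (Ne.symm h.2) hx.1)).symm

theorem Convex.eq_zero_of_sub_mem_of_mem_extremePoints (hA : Convex 𝕜 A)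
    (hx : x ∈ A.extremePoints 𝕜) {u v w : E} (hu : x - u ∈ A) (hv : x - v ∈ A) (hw : x - w ∈ A)
    (huvw : u + v + w = 0) : w = 0 := by
  -- `x` lies strictly between `x - w` and `x + w / 2`, the midpoint of `x - u` and `x - v`
  have hmid : x + (2⁻¹ : 𝕜) • w ∈ A := by
    convert hA hu hv (by norm_num : (0 : 𝕜) ≤ 2⁻¹) (by norm_num : (0 : 𝕜) ≤ 2⁻¹) (by norm_num)
      using 1
    rw [eq_neg_of_add_eq_zero_right huvw]
    module
  simpa using hx.2 hmid hw ⟨2 / 3, 1 / 3, by norm_num, by norm_num, by norm_num, by module⟩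

variable (l : E →ₗ[𝕜] 𝕜)

theorem mem_extremePoints_of_forall_lt (hxA : x ∈ A) (hmax : ∀ y ∈ A, y ≠ x → l y < l x) :
    x ∈ A.extremePoints 𝕜 := by
  refine ⟨hxA, fun y hy z hz ⟨a, b, ha, hb, hab, hx⟩ => ?_⟩
  by_contra hyx
  have hlz : l z ≤ l x := by
    rcases eq_or_ne z x with rfl | hzx
    exacts [le_rfl, (hmax z hz hzx).le]
  have : l x < l x := calc
    l x = a * l y + b * l z := by rw [← hx]; simp
    _ < a * l x + b * l x :=
      add_lt_add_of_lt_of_le (mul_lt_mul_of_pos_left (hmax y hy hyx) ha)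
        (mul_le_mul_of_nonneg_left hlz hb.le)
    _ = l x := by rw [← add_mul, hab, one_mul]
  exact lt_irrefl _ this

theorem LinearMap.lt_of_mem_segment {a b y : E} (hab : l b < l a) (hy : y ∈ segment 𝕜 a b)
    (hya : y ≠ a) : l y < l a := by
  obtain ⟨s, t, hs, ht, hst, rfl⟩ := hy
  have ht0 : t ≠ 0 := by
    rintro rfl
    rw [add_zero] at hst
    simp [hst] at hya
  calc l (s • a + t • b) = s * l a + t * l b := by simp
    _ < s * l a + t * l a := by gcongr
    _ = l a := by rw [← add_mul, hst, one_mul]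

theorem LinearMap.lt_of_mem_finsetSum {s : Finset ι} {S : ι → Set E} {g : ι → E}
    (hmax : ∀ p ∈ s, ∀ y ∈ S p, y ≠ g p → l y < l (g p)) {y : E} (hy : y ∈ ∑ p ∈ s, S p)
    (hne : y ≠ ∑ p ∈ s, g p) : l y < l (∑ p ∈ s, g p) := by
  obtain ⟨f, hf, rfl⟩ := (Set.mem_finsetSum _ _ _).1 hy
  obtain ⟨p, hp, hfp⟩ : ∃ p ∈ s, f p ≠ g p := by
    by_contra! h
    exact hne (sum_congr rfl h)
  simp only [map_sum]
  refine sum_lt_sum (fun q hq => ?_) ⟨p, hp, hmax p hp _ (hf hp) hfp⟩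
  rcases eq_or_ne (f q) (g q) with h | h
  exacts [(congrArg l h).le, (hmax q hq _ (hf hq) h).le]

end ExtremePoints

def ltPairs (α : Type*) [Fintype α] [LinearOrder α] : Finset (α × α) :=
  univ.filter fun p => p.1 < p.2

theorem sum_ltPairs_add_swap {α M : Type*} [Fintype α] [LinearOrder α] [AddCommMonoid M]
    (F : α → α → M) (hF : ∀ a, F a a = 0) :
    ∑ p ∈ ltPairs α, (F p.1 p.2 + F p.2 p.1) = ∑ a, ∑ b, F a b := by
  have hswap : ∑ p ∈ ltPairs α, F p.2 p.1 =
      ∑ q ∈ univ.filter (fun q : α × α => q.2 < q.1), F q.1 q.2 :=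
    sum_equiv (Equiv.prodComm α α) (by simp [ltPairs]) (by simp)
  have hdiag : ∑ q ∈ univ.filter (fun q : α × α => q.2 < q.1), F q.1 q.2 =
      ∑ q ∈ univ.filter (fun q : α × α => ¬ q.1 < q.2), F q.1 q.2 := by
    refine sum_subset (fun q => by simpa using le_of_lt) fun q hq hq' => ?_
    simp only [mem_filter, mem_univ, true_and, not_lt] at hq hq'
    rw [le_antisymm hq hq', hF]
  rw [sum_add_distrib, hswap, hdiag, ← Fintype.sum_prod_type', ltPairs,
    sum_filter_add_sum_filter_not]

structure IsTournament {α : Type*} (r : α → α → Prop) : Prop where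
  asymm : ∀ ⦃a b⦄, r a b → ¬ r b a
  total : ∀ ⦃a b⦄, a ≠ b → r a b ∨ r b a

namespace IsTournament

variable {α : Type*} {r : α → α → Prop}

theorem irrefl (hr : IsTournament r) (a : α) : ¬ r a a := fun h => hr.asymm h h

theorem ne (hr : IsTournament r) {a b : α} (h : r a b) : a ≠ b := by
  rintro rfl
  exact hr.irrefl a h

theorem card_wins_add_card_losses [Fintype α] [DecidableEq α] [DecidableRel r]
    (hr : IsTournament r) (a : α) : #{b | r a b} + #{b | r b a} = Fintype.card α - 1 := by
  rw [← card_union_of_disjoint, ← card_univ, ← card_erase_of_mem (mem_univ a)]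
  · congr 1
    ext b
    simp only [mem_union, mem_filter, mem_univ, true_and, mem_erase, and_true]
    refine ⟨?_, fun hb => hr.total (Ne.symm hb)⟩
    rintro (h | h) <;> rintro rfl <;> exact hr.irrefl b h
  · exact disjoint_filter.2 fun b _ h => hr.asymm h

theorem exists_perm_val_eq_card_wins {n : ℕ} {r : Fin n → Fin n → Prop} [DecidableRel r]
    (hr : IsTournament r) (htrans : ∀ ⦃a b c⦄, r a b → r b c → r a c) :
    ∃ π : Equiv.Perm (Fin n), ∀ i, (π i : ℕ) = #{j | r i j} := by
  have hlt : ∀ i, #{j | r i j} < n := fun i => by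
    have := hr.card_wins_add_card_losses i
    have := i.pos
    rw [Fintype.card_fin] at *
    omega
  have hmono : ∀ ⦃i j⦄, r i j → #{k | r j k} < #{k | r i k} := fun i j hij => by
    refine card_lt_card ((ssubset_iff_of_subset fun k hk => ?_).2 ⟨j, ?_, ?_⟩)
    · simp only [mem_filter, mem_univ, true_and] at hk ⊢
      exact htrans hij hk
    · simpa using hij
    · simpa using hr.irrefl j
  have hinj : Function.Injective fun i => (⟨#{j | r i j}, hlt i⟩ : Fin n) := fun i j h => by
    by_contra hij
    have hcard : #{k | r i k} = #{k | r j k} := congrArg Fin.val h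
    rcases hr.total hij with h' | h'
    exacts [(hmono h').ne' hcard, (hmono h').ne hcard]
  exact ⟨Equiv.ofBijective _ hinj.bijective_of_finite, fun i => rfl⟩

end IsTournament

theorem isTournament_of_injective {α β : Type*} [LinearOrder β] {f : α → β}
    (hf : Function.Injective f) : IsTournament fun a b => f b < f a :=
  ⟨fun _ _ h => h.not_gt, fun _ _ h => (lt_or_gt_of_ne (hf.ne h)).symm⟩

section Coordinates

variable {n : ℕ}

theorem lo_injective : Function.Injective (lo : Fin n → Fin (2 * n)) :=
  fun i j h => Fin.ext (by simpa [lo] using congrArg Fin.val h)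

theorem hi_injective : Function.Injective (hi : Fin n → Fin (2 * n)) :=
  fun i j h => Fin.ext (by simpa [hi] using congrArg Fin.val h)

theorem lo_ne_hi (i j : Fin n) : lo i ≠ hi j := fun h => by
  have := congrArg Fin.val h
  simp only [lo, hi] at this
  omega

theorem lo_or_hi (k : Fin (2 * n)) : (∃ i, lo i = k) ∨ ∃ i, hi i = k := by
  by_cases hk : (k : ℕ) < n
  · exact Or.inl ⟨⟨k, hk⟩, rfl⟩
  · exact Or.inr ⟨⟨k - n, by omega⟩, Fin.ext (by simp only [hi]; omega)⟩

theorem funext_lo_hi {x y : Fin (2 * n) → ℝ} (hlo : ∀ i, x (lo i) = y (lo i))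
    (hhi : ∀ i, x (hi i) = y (hi i)) : x = y := by
  funext k
  rcases lo_or_hi k with ⟨i, rfl⟩ | ⟨i, rfl⟩
  exacts [hlo i, hhi i]

def winVec (i j : Fin n) : Fin (2 * n) → ℝ :=
  Pi.single (lo i) 1 + Pi.single (hi j) 1

@[simp]
theorem winVec_lo (i j k : Fin n) : winVec i j (lo k) = if k = i then 1 else 0 := by
  simp [winVec, Pi.single_apply, lo_injective.eq_iff, lo_ne_hi]

@[simp]
theorem winVec_hi (i j k : Fin n) : winVec i j (hi k) = if k = j then 1 else 0 := by
  simp [winVec, Pi.single_apply, hi_injective.eq_iff, (lo_ne_hi _ _).symm]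

theorem winVec_sub_swap_ne_zero {i j : Fin n} (h : i ≠ j) : winVec i j - winVec j i ≠ 0 :=
  fun h0 => by simpa [h] using congrFun h0 (lo i)

theorem newtUn_eq :
    newtUn n = ∑ p ∈ ltPairs (Fin n), segment ℝ (winVec p.1 p.2) (winVec p.2 p.1) :=
  rfl

theorem convex_newtUn (n : ℕ) : Convex ℝ (newtUn n) :=
  convex_sum _ fun _ _ => convex_segment _ _

end Coordinates

section TournamentVec

variable {n : ℕ} {r : Fin n → Fin n → Prop} [DecidableRel r]

def tournamentVec (r : Fin n → Fin n → Prop) [DecidableRel r] : Fin (2 * n) → ℝ :=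
  ∑ i, ∑ j, if r i j then winVec i j else 0

theorem tournamentVec_lo (k : Fin n) : tournamentVec r (lo k) = #{j | r k j} := by
  simp only [tournamentVec, Finset.sum_apply, ite_apply, winVec_lo, Pi.zero_apply]
  rw [sum_eq_single k (fun i _ hik => by simp [Ne.symm hik]) (by simp)]
  simp

theorem tournamentVec_hi (k : Fin n) : tournamentVec r (hi k) = #{i | r i k} := by
  simp only [tournamentVec, Finset.sum_apply, ite_apply, winVec_hi, Pi.zero_apply]
  rw [sum_comm, sum_eq_single k (fun j _ hjk => by simp [Ne.symm hjk]) (by simp)]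
  simp

namespace IsTournament

variable (hr : IsTournament r)
include hr

theorem tournamentVec_hi_eq_sub (k : Fin n) :
    tournamentVec r (hi k) = n - 1 - tournamentVec r (lo k) := by
  have h := hr.card_wins_add_card_losses k
  have := k.pos
  rw [Fintype.card_fin] at h
  rw [tournamentVec_lo, tournamentVec_hi, eq_sub_iff_add_eq, add_comm, ← Nat.cast_add, h,
    Nat.cast_sub (by omega), Nat.cast_one]

theorem tournamentVec_eq_sum : tournamentVec r =
    ∑ p ∈ ltPairs (Fin n), if r p.1 p.2 then winVec p.1 p.2 else winVec p.2 p.1 := by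
  rw [tournamentVec, ← sum_ltPairs_add_swap _ fun i => if_neg (hr.irrefl i)]
  refine sum_congr rfl fun p hp => ?_
  have hne : p.1 ≠ p.2 := (mem_filter.1 hp).2.ne
  by_cases h : r p.1 p.2
  · simp [h, hr.asymm h]
  · simp [h, (hr.total hne).resolve_left h]

theorem tournamentVec_mem_newtUn : tournamentVec r ∈ newtUn n := by
  rw [hr.tournamentVec_eq_sum, newtUn_eq]
  exact Set.finsetSum_mem_finsetSum _ _ _ fun p _ => ite_mem_segment _ _ _

theorem tournamentVec_sub_mem_newtUn {i j : Fin n} (hij : r i j) :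
    tournamentVec r - (winVec i j - winVec j i) ∈ newtUn n := by
  rw [hr.tournamentVec_eq_sum, newtUn_eq]
  have hmem : ∀ p ∈ ltPairs (Fin n), (if r p.1 p.2 then winVec p.1 p.2 else winVec p.2 p.1) ∈
      segment ℝ (winVec p.1 p.2) (winVec p.2 p.1) := fun p _ => ite_mem_segment _ _ _
  rcases lt_or_gt_of_ne (hr.ne hij) with h | h
  · convert Set.sum_sub_add_mem_finsetSum hmem (p := (i, j)) (by simpa [ltPairs])
      (right_mem_segment ℝ _ _) using 1
    rw [if_pos hij]
    abel
  · convert Set.sum_sub_add_mem_finsetSum hmem (p := (j, i)) (by simpa [ltPairs])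
      (left_mem_segment ℝ _ _) using 1
    rw [if_neg (hr.asymm hij)]
    abel

theorem transitive_of_mem_extremePoints (hx : tournamentVec r ∈ (newtUn n).extremePoints ℝ)
    ⦃i j k : Fin n⦄ (hij : r i j) (hjk : r j k) : r i k := by
  by_contra hik
  have hki : r k i := (hr.total fun h => by subst h; exact hr.asymm hij hjk).resolve_left hik
  exact winVec_sub_swap_ne_zero (hr.ne hki)
    ((convex_newtUn n).eq_zero_of_sub_mem_of_mem_extremePoints hx
      (hr.tournamentVec_sub_mem_newtUn hij) (hr.tournamentVec_sub_mem_newtUn hjk)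
      (hr.tournamentVec_sub_mem_newtUn hki) (by simp only [winVec]; abel))

end IsTournament

theorem exists_isTournament_of_mem_extremePoints {x : Fin (2 * n) → ℝ}
    (hx : x ∈ (newtUn n).extremePoints ℝ) :
    ∃ (r : Fin n → Fin n → Prop) (_ : DecidableRel r), IsTournament r ∧ tournamentVec r = x := by
  classical
  rw [newtUn_eq] at hx
  obtain ⟨g, hg, rfl⟩ := (Set.mem_finsetSum _ _ _).1 hx.1
  have hend : ∀ p ∈ ltPairs (Fin n), g p = winVec p.1 p.2 ∨ g p = winVec p.2 p.1 := fun p hp =>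
    eq_or_eq_of_mem_extremePoints_segment
      (mem_extremePoints_of_sum_mem_extremePoints hx (fun _ => hg) hp)
  -- by `hend`, `g (j, i) ≠ winVec j i` means `g (j, i) = winVec i j`
  let r : Fin n → Fin n → Prop := fun i j =>
    (i < j ∧ g (i, j) = winVec i j) ∨ (j < i ∧ g (j, i) ≠ winVec j i)
  have hr : IsTournament r := by
    refine ⟨fun i j hij hji => ?_, fun i j hij => ?_⟩
    · rcases hij with ⟨h, e⟩ | ⟨h, e⟩ <;> rcases hji with ⟨h', e'⟩ | ⟨h', e'⟩
      exacts [lt_asymm h h', e' e, e e', lt_asymm h h']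
    · rcases lt_or_gt_of_ne hij with h | h
      · by_cases e : g (i, j) = winVec i j
        exacts [Or.inl (Or.inl ⟨h, e⟩), Or.inr (Or.inr ⟨h, e⟩)]
      · by_cases e : g (j, i) = winVec j i
        exacts [Or.inr (Or.inl ⟨h, e⟩), Or.inl (Or.inr ⟨h, e⟩)]
  refine ⟨r, inferInstance, hr, ?_⟩
  rw [hr.tournamentVec_eq_sum]
  refine sum_congr rfl fun p hp => ?_
  have hlt : p.1 < p.2 := (mem_filter.1 hp).2
  have hrp : r p.1 p.2 ↔ g p = winVec p.1 p.2 := by simp [r, hlt, hlt.not_gt]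
  split_ifs with h
  · exact (hrp.1 h).symm
  · exact ((hend p hp).resolve_left (mt hrp.2 h)).symm

end TournamentVec

section Permutations

variable {n : ℕ}

def loFunctional (c : Fin n → ℝ) : (Fin (2 * n) → ℝ) →ₗ[ℝ] ℝ :=
  ∑ i, c i • LinearMap.proj (lo i)

@[simp]
theorem loFunctional_winVec (c : Fin n → ℝ) (i j : Fin n) :
    loFunctional c (winVec i j) = c i := by
  simp [loFunctional]

variable (π : Equiv.Perm (Fin n))

theorem card_filter_perm_lt (i : Fin n) : #{j | π j < π i} = π i := by
  rw [card_filter, Equiv.sum_comp π fun m => if m < π i then 1 else 0, ← card_filter,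
    filter_gt_eq_Iio, Fin.card_Iio]

theorem tournamentVec_perm_lo (i : Fin n) :
    tournamentVec (fun i j => π j < π i) (lo i) = π i := by
  rw [tournamentVec_lo, card_filter_perm_lt]

theorem tournamentVec_perm_hi (i : Fin n) :
    tournamentVec (fun i j => π j < π i) (hi i) = n - 1 - π i := by
  rw [(isTournament_of_injective π.injective).tournamentVec_hi_eq_sub, tournamentVec_perm_lo]

theorem tournamentVec_perm_mem_extremePoints :
    tournamentVec (fun i j => π j < π i) ∈ (newtUn n).extremePoints ℝ := by
  have hr := isTournament_of_injective π.injective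
  set l := loFunctional fun i => ((π i : ℕ) : ℝ)
  refine mem_extremePoints_of_forall_lt l hr.tournamentVec_mem_newtUn fun y hy hne => ?_
  rw [hr.tournamentVec_eq_sum] at hne ⊢
  rw [newtUn_eq] at hy
  refine l.lt_of_mem_finsetSum (fun p hp y hy hne => ?_) hy hne
  split_ifs at hne ⊢ with h
  · exact l.lt_of_mem_segment (by simpa [l] using h) hy hne
  · rw [segment_symm] at hy
    have hlt : π p.1 < π p.2 :=
      lt_of_le_of_ne (not_lt.1 h) (π.injective.ne (mem_filter.1 hp).2.ne)
    exact l.lt_of_mem_segment (by simpa [l] using hlt) hy hne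

end Permutations

/-- The vertices of `Newt(U_n)` are exactly the points `(π, π^c) − (1,…,1)` for `π ∈ S_n`,
where `π^c(i) = n + 1 − π(i)`. -/
theorem newtUn_vertices (n : ℕ) :
    Set.extremePoints ℝ (newtUn n) =
      {x | ∃ π : Equiv.Perm (Fin n), ∀ i : Fin n,
        x (lo i) = (((π i : ℕ) : ℝ) + 1) - 1 ∧
        x (hi i) = ((n : ℝ) + 1 - (((π i : ℕ) : ℝ) + 1)) - 1} := by
  ext x
  constructor
  · intro hx
    obtain ⟨r, _, hr, rfl⟩ := exists_isTournament_of_mem_extremePoints hx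
    obtain ⟨π, hπ⟩ := hr.exists_perm_val_eq_card_wins (hr.transitive_of_mem_extremePoints hx)
    refine ⟨π, fun i => ⟨?_, ?_⟩⟩
    · rw [tournamentVec_lo, hπ]
      ring
    · rw [hr.tournamentVec_hi_eq_sub, tournamentVec_lo, hπ]
      ring
  · rintro ⟨π, hπ⟩
    convert tournamentVec_perm_mem_extremePoints π
    refine funext_lo_hi (fun i => ?_) fun i => ?_
    · rw [(hπ i).1, tournamentVec_perm_lo]
      ring
    · rw [(hπ i).2, tournamentVec_perm_hi]
      ring
end

section
/- Let M_n be the (2n+1) × (3n+1) integer matrix whose first 3n columns form the block matrix α(A ⊕ ⋯ ⊕ A) (n copies of A = [[1,1,0],[0,1,1]] on the diagonal with a row of all 1s appended at the bottom), and whose last column is e_{2n+1}. Then M_n has rank 2n+1. -/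
/-!
The columns `0, 2, 3, 5, …, 3k, 3k + 2, …, 3n` of `M_n` (the outer columns of each copy of `A`,
then `e_{2n+1}`) form a square matrix that is the identity except for its bottom row of ones.
It is lower unitriangular, hence invertible, so `M_n` has full row rank.
-/

/-- The `(2n+1) × (3n+1)` matrix `M_n` of the code `P(2_n)`: the first `3n` columns form
`α(A ⊕ ⋯ ⊕ A)` with `A = [[1,1,0],[0,1,1]]` and a row of ones appended at the bottom, and
the last column is `e_{2n+1}`. -/
def Mmat (n : ℕ) : Matrix (Fin (2 * n + 1)) (Fin (3 * n + 1)) ℚ := fun i c =>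
  if (c : ℕ) = 3 * n then (if (i : ℕ) = 2 * n then 1 else 0)
  else if (i : ℕ) = 2 * n then 1
  else if (i : ℕ) = 2 * ((c : ℕ) / 3) then (if (c : ℕ) % 3 ≤ 1 then 1 else 0)
  else if (i : ℕ) = 2 * ((c : ℕ) / 3) + 1 then (if 1 ≤ (c : ℕ) % 3 then 1 else 0)
  else 0

def pivotCol (n : ℕ) (j : Fin (2 * n + 1)) : Fin (3 * n + 1) :=
  ⟨3 * (j / 2) + 2 * (j % 2), by omega⟩

lemma Mmat_apply_pivotCol (n : ℕ) (i j : Fin (2 * n + 1)) :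
    Mmat n i (pivotCol n j) = if (i : ℕ) = 2 * n ∨ i = j then 1 else 0 := by
  unfold Mmat pivotCol
  dsimp only
  split_ifs <;> simp only [Fin.ext_iff] at * <;> omega

lemma isLowerTriangular_submatrix_pivotCol (n : ℕ) :
    ((Mmat n).submatrix id (pivotCol n)).IsLowerTriangular := by
  intro i j hij
  have hij : (i : ℕ) < j := hij
  rw [Matrix.submatrix_apply, id, Mmat_apply_pivotCol, if_neg (by omega)]

lemma det_submatrix_pivotCol (n : ℕ) : ((Mmat n).submatrix id (pivotCol n)).det = 1 := by
  rw [Matrix.det_of_isLowerTriangular _ (isLowerTriangular_submatrix_pivotCol n)]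
  simp [Mmat_apply_pivotCol]

/-- `M_n` has rank `2n + 1`. -/
theorem Mmat_rank (n : ℕ) : (Mmat n).rank = 2 * n + 1 := by
  have hunit : IsUnit ((Mmat n).submatrix id (pivotCol n)) := by
    rw [Matrix.isUnit_iff_isUnit_det, det_submatrix_pivotCol]
    exact isUnit_one
  refine le_antisymm (by simpa using (Mmat n).rank_le_card_height) ?_
  calc 2 * n + 1 = ((Mmat n).submatrix id (pivotCol n)).rank := by
        rw [Matrix.rank_of_isUnit _ hunit, Fintype.card_fin]
    _ ≤ (Mmat n).rank := Matrix.rank_submatrix_le _ _ _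
end

section
/- Let n ≥ 1 and let I_n = {S ∪ {n+1} : S ⊆ [n], 1 ≤ |S| ≤ 2}. Then the building closure of I_n is Î_n = {{i} : i ∈ [n]} ∪ {J ∪ {n+1} : J ⊆ [n]}. That is, Î_n is the unique minimal building set on [n+1] containing I_n. -/
/-- A building set on the ground set `Fin m`: a collection of nonempty subsets closed under
unions of intersecting members and containing all singletons. -/
def IsBuildingSet {m : ℕ} (F : Set (Finset (Fin m))) : Prop :=
  (∀ S ∈ F, S.Nonempty) ∧
  (∀ S ∈ F, ∀ T ∈ F, (S ∩ T).Nonempty → S ∪ T ∈ F) ∧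
  (∀ i : Fin m, {i} ∈ F)

/-- The collection `I_n = {S ∪ {n+1} : S ⊆ [n], 1 ≤ |S| ≤ 2}` on the ground set `[n+1]`
(modelled as `Fin (n+1)`, with `n+1` the last element). -/
def In (n : ℕ) : Set (Finset (Fin (n + 1))) :=
  {S | ∃ T : Finset (Fin (n + 1)),
    Fin.last n ∉ T ∧ 1 ≤ T.card ∧ T.card ≤ 2 ∧ S = insert (Fin.last n) T}

/-- The collection `Î_n = {{i} : i ∈ [n]} ∪ {J ∪ {n+1} : J ⊆ [n]}`. -/
def Ihat (n : ℕ) : Set (Finset (Fin (n + 1))) :=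
  {S | (∃ i : Fin (n + 1), i ≠ Fin.last n ∧ S = {i}) ∨ Fin.last n ∈ S}

/-! `Î_n` is a building set because two intersecting members are either the same singleton or
one of them contains `n+1`, and then so does their union. Conversely, any two sets through `n+1`
intersect there, so a building set containing the pairs `{i, n+1}` contains every set through
`n+1`, by gluing the pairs on one at a time. -/

theorem insert_mem_of_pair_mem {α : Type*} [DecidableEq α] {F : Set (Finset α)}
    (hunion : ∀ S ∈ F, ∀ T ∈ F, (S ∩ T).Nonempty → S ∪ T ∈ F) {p : α} (hp : {p} ∈ F)
    (hpair : ∀ i, i ≠ p → {p, i} ∈ F) (T : Finset α) : insert p T ∈ F := by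
  induction T using Finset.induction_on with
  | empty => simpa using hp
  | @insert i T _ ih =>
    rcases eq_or_ne i p with rfl | hip
    · rwa [Finset.insert_idem]
    · have hglue := hunion _ ih _ (hpair i hip) ⟨p, by simp⟩
      rwa [show insert p T ∪ {p, i} = insert p (insert i T) by ext; simp] at hglue

theorem pair_last_mem_In {n : ℕ} {i : Fin (n + 1)} (hi : i ≠ Fin.last n) :
    {Fin.last n, i} ∈ In n :=
  ⟨{i}, by simpa using hi.symm, by simp, by simp, rfl⟩

theorem Ihat_isBuildingSet (n : ℕ) : IsBuildingSet (Ihat n) := by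
  refine ⟨?_, ?_, fun i => ?_⟩
  · rintro S (⟨i, -, rfl⟩ | hS)
    exacts [Finset.singleton_nonempty i, ⟨_, hS⟩]
  · rintro S (⟨i, hi, rfl⟩ | hS) T (⟨j, -, rfl⟩ | hT) hST
    · obtain ⟨x, hx⟩ := hST
      rw [Finset.mem_inter, Finset.mem_singleton, Finset.mem_singleton] at hx
      obtain rfl : i = j := hx.1.symm.trans hx.2
      exact Or.inl ⟨i, hi, Finset.union_self _⟩
    · exact Or.inr (Finset.mem_union_right _ hT)
    · exact Or.inr (Finset.mem_union_left _ hS)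
    · exact Or.inr (Finset.mem_union_left _ hS)
  · rcases eq_or_ne i (Fin.last n) with rfl | hi
    exacts [Or.inr (Finset.mem_singleton_self _), Or.inl ⟨i, hi, rfl⟩]

theorem In_subset_Ihat (n : ℕ) : In n ⊆ Ihat n := by
  rintro S ⟨T, -, -, -, rfl⟩
  exact Or.inr (Finset.mem_insert_self _ _)

theorem Ihat_subset_of_In_subset {n : ℕ} {F : Set (Finset (Fin (n + 1)))}
    (hF : IsBuildingSet F) (hIn : In n ⊆ F) : Ihat n ⊆ F := by
  rintro S (⟨i, -, rfl⟩ | hS)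
  · exact hF.2.2 i
  · rw [← Finset.insert_eq_of_mem hS]
    exact insert_mem_of_pair_mem hF.2.1 (hF.2.2 _) (fun i hi => hIn (pair_last_mem_In hi)) S

theorem building_closure_In_general (n : ℕ) :
    IsBuildingSet (Ihat n) ∧ In n ⊆ Ihat n ∧
      ∀ F : Set (Finset (Fin (n + 1))), IsBuildingSet F → In n ⊆ F → Ihat n ⊆ F :=
  ⟨Ihat_isBuildingSet n, In_subset_Ihat n, fun _ hF hIn => Ihat_subset_of_In_subset hF hIn⟩

/-- `Î_n` is the building closure of `I_n`: it is a building set containing `I_n`, and every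
building set containing `I_n` contains `Î_n`. -/
theorem building_closure_In (n : ℕ) (hn : 1 ≤ n) :
    IsBuildingSet (Ihat n) ∧ In n ⊆ Ihat n ∧
      ∀ F : Set (Finset (Fin (n + 1))), IsBuildingSet F → In n ⊆ F → Ihat n ⊆ F :=
  building_closure_In_general n
end

section
/- Let Î_n = {{i} : i ∈ [n]} ∪ {J ∪ {n+1} : J ⊆ [n]} be the building set on [n+1]. Then the inclusion-maximal nested sets of Î_n are exactly the chains-with-singletons of the form {I_1,…,I_{n+1}} where I_1,…,I_k are k distinct singletons of [n] (0 ≤ k ≤ n), I_{k+1} = I_1 ∪ ⋯ ∪ I_k ∪ {n+1}, and I_{j+1} ⊋ I_j with |I_{j+1} \ I_j| = 1 for all j ≥ k+1 (so I_{n+1} = [n+1]). -/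
/-- A nested set for the building set `Î_n`: a subcollection whose members are pairwise
comparable or disjoint, such that no union of `≥ 2` pairwise disjoint members lies in `Î_n`,
and containing every inclusion-maximal element of `Î_n`. -/
def IsNestedSet (n : ℕ) (N : Set (Finset (Fin (n + 1)))) : Prop :=
  N ⊆ Ihat n ∧
  (∀ I ∈ N, ∀ J ∈ N, I ⊆ J ∨ J ⊆ I ∨ I ∩ J = ∅) ∧
  (∀ C : Finset (Finset (Fin (n + 1))), ↑C ⊆ N → 2 ≤ C.card →
    (∀ I ∈ C, ∀ J ∈ C, I ≠ J → I ∩ J = ∅) → C.sup id ∉ Ihat n) ∧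
  (∀ I ∈ Ihat n, (∀ J ∈ Ihat n, I ⊆ J → I = J) → I ∈ N)

/-- A maximal nested set: nested and not properly contained in another nested set. -/
def IsMaxNestedSet (n : ℕ) (N : Set (Finset (Fin (n + 1)))) : Prop :=
  IsNestedSet n N ∧ ∀ N', IsNestedSet n N' → N ⊆ N' → N' = N

/-!
Write `ℓ = n+1`. Since every member of `Î_n` not containing `ℓ` is a singleton, a family is
nested exactly when it contains `[n+1]` and any two members are comparable or are disjoint with
neither containing `ℓ`. So the members containing `ℓ` form a chain, and each of them contains
every singleton of the family. In a maximal nested set `N`, let `S` be the points of its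
singletons: `S ∪ {ℓ}` is comparable with every member, hence lies in `N`, and above any chain
member `J ≠ [n+1]` one can add `J` plus one point of the next chain member; so the chain grows
one point at a time from `S ∪ {ℓ}` up to `[n+1]`. Conversely, every member of a nested family
containing such a chain with singletons is one of its sets: a member containing `ℓ` is pinned
down by its size, and a singleton lies in `S ∪ {ℓ}`.
-/

open Finset

def Ihat.Compatible (n : ℕ) (I J : Finset (Fin (n + 1))) : Prop :=
  I ⊆ J ∨ J ⊆ I ∨ (Disjoint I J ∧ Fin.last n ∉ I ∧ Fin.last n ∉ J)

section Ihat

variable {n : ℕ} {N : Set (Finset (Fin (n + 1)))} {I J : Finset (Fin (n + 1))}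

lemma Ihat.nonempty_of_mem (hI : I ∈ Ihat n) : I.Nonempty := by
  rcases hI with ⟨i, -, rfl⟩ | hI
  · exact singleton_nonempty i
  · exact ⟨_, hI⟩

lemma Ihat.mem_of_last_mem (hI : Fin.last n ∈ I) : I ∈ Ihat n := Or.inr hI

lemma Ihat.eq_singleton_of_last_notMem (hI : I ∈ Ihat n) (hl : Fin.last n ∉ I) :
    ∃ i, i ≠ Fin.last n ∧ I = {i} :=
  hI.resolve_right hl

lemma Ihat.Compatible.symm (h : Ihat.Compatible n I J) : Ihat.Compatible n J I := by
  rcases h with h | h | ⟨hd, hI, hJ⟩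
  exacts [Or.inr (Or.inl h), Or.inl h, Or.inr (Or.inr ⟨hd.symm, hJ, hI⟩)]

lemma Ihat.Compatible.last_notMem_of_disjoint (h : Ihat.Compatible n I J) (hd : Disjoint I J)
    (hI : I.Nonempty) (hJ : J.Nonempty) : Fin.last n ∉ I := by
  rcases h with h | h | ⟨-, hl, -⟩
  · exact absurd (disjoint_self.mp (disjoint_of_subset_left h hd.symm)) hI.ne_empty
  · exact absurd (disjoint_self.mp (disjoint_of_subset_right h hd.symm)) hJ.ne_empty
  · exact hl

lemma Ihat.eq_univ_of_maximal (hmax : ∀ J ∈ Ihat n, I ⊆ J → I = J) :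
    I = univ :=
  hmax univ (Ihat.mem_of_last_mem (mem_univ _)) (subset_univ I)

/-- Condition (2) only has to be checked on pairs: a union of disjoint members of `Î_n` with at
least two members is not a singleton, so it lies in `Î_n` exactly when some member contains
`n+1`. -/
theorem isNestedSet_iff :
    IsNestedSet n N ↔
      N ⊆ Ihat n ∧ (∀ I ∈ N, ∀ J ∈ N, Ihat.Compatible n I J) ∧ (univ : Finset _) ∈ N := by
  classical
  constructor
  · rintro ⟨hsub, hcomp, hunion, hmax⟩
    refine ⟨hsub, fun I hI J hJ => ?_, hmax _ (Ihat.mem_of_last_mem (mem_univ _))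
      fun J _ hJ => (univ_subset_iff.mp hJ).symm⟩
    rcases hcomp I hI J hJ with h | h | h
    · exact Or.inl h
    · exact Or.inr (Or.inl h)
    obtain rfl | hne := eq_or_ne I J
    · exact Or.inl subset_rfl
    have hpair := hunion {I, J} (by simp [Set.insert_subset_iff, hI, hJ])
      (card_pair hne).ge (by aesop (add simp inter_comm))
    simp only [sup_insert, sup_singleton, id, Ihat, Set.mem_ofPred_eq, sup_eq_union, mem_union,
      not_or] at hpair
    exact Or.inr (Or.inr ⟨disjoint_iff_inter_eq_empty.mpr h, hpair.2⟩)
  · rintro ⟨hsub, hcomp, huniv⟩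
    refine ⟨hsub, fun I hI J hJ => ?_, fun C hC hcard hdisj hsup => ?_,
      fun I hI hmax => Ihat.eq_univ_of_maximal hmax ▸ huniv⟩
    · rcases hcomp I hI J hJ with h | h | ⟨hd, -⟩
      exacts [Or.inl h, Or.inr (Or.inl h), Or.inr (Or.inr (disjoint_iff_inter_eq_empty.mp hd))]
    have hne : ∀ K ∈ C, K.Nonempty := fun K hK => Ihat.nonempty_of_mem (hsub (hC hK))
    have hlast : Fin.last n ∉ C.sup id := by
      simp only [mem_sup, id, not_exists, not_and]
      intro K hK
      obtain ⟨K', hK', hKK'⟩ := exists_mem_ne hcard K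
      have hd : Disjoint K K' := disjoint_iff_inter_eq_empty.mpr (hdisj K hK K' hK' hKK'.symm)
      exact (hcomp K (hC hK) K' (hC hK')).last_notMem_of_disjoint hd (hne K hK) (hne K' hK')
    obtain ⟨i, -, hi⟩ := Ihat.eq_singleton_of_last_notMem hsup hlast
    obtain ⟨K, hK, K', hK', hKK'⟩ := one_lt_card.mp hcard
    have hsingle : ∀ L ∈ C, L = {i} := fun L hL =>
      (subset_singleton_iff.mp (hi ▸ le_sup (f := id) hL)).resolve_left (hne L hL).ne_empty
    exact hKK' ((hsingle K hK).trans (hsingle K' hK').symm)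

end Ihat

namespace IsNestedSet

variable {n : ℕ} {N : Set (Finset (Fin (n + 1)))} {I J X : Finset (Fin (n + 1))}

lemma compatible (hN : IsNestedSet n N) (hI : I ∈ N) (hJ : J ∈ N) : Ihat.Compatible n I J :=
  (isNestedSet_iff.mp hN).2.1 I hI J hJ

lemma subset_of_last_notMem (hN : IsNestedSet n N) (hI : I ∈ N) (hJ : J ∈ N)
    (hlI : Fin.last n ∉ I) (hlJ : Fin.last n ∈ J) : I ⊆ J := by
  rcases hN.compatible hI hJ with h | h | ⟨-, -, h⟩
  exacts [h, absurd (h hlJ) hlI, absurd hlJ h]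

lemma subset_or_subset_of_last_mem (hN : IsNestedSet n N) (hI : I ∈ N) (hJ : J ∈ N)
    (hl : Fin.last n ∈ I) : I ⊆ J ∨ J ⊆ I := by
  rcases hN.compatible hI hJ with h | h | ⟨-, h, -⟩
  exacts [Or.inl h, Or.inr h, absurd hl h]

lemma subset_of_card_le (hN : IsNestedSet n N) (hI : I ∈ N) (hJ : J ∈ N)
    (hl : Fin.last n ∈ I) (hcard : I.card ≤ J.card) : I ⊆ J := by
  rcases hN.subset_or_subset_of_last_mem hI hJ hl with h | h
  · exact h
  · exact (eq_of_subset_of_card_le h hcard).ge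

lemma eq_of_card_eq (hN : IsNestedSet n N) (hI : I ∈ N) (hJ : J ∈ N)
    (hl : Fin.last n ∈ I) (hcard : I.card = J.card) : I = J :=
  eq_of_subset_of_card_le (hN.subset_of_card_le hI hJ hl hcard.le) hcard.ge

lemma insert (hN : IsNestedSet n N) (hlX : Fin.last n ∈ X) (hX : ∀ J ∈ N, J ⊆ X ∨ X ⊆ J) :
    IsNestedSet n (insert X N) := by
  obtain ⟨hsub, hcomp, huniv⟩ := isNestedSet_iff.mp hN
  have hXcomp : ∀ J ∈ N, Ihat.Compatible n X J := fun J hJ =>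
    (hX J hJ).elim (fun h => Or.inr (Or.inl h)) Or.inl
  refine isNestedSet_iff.mpr ⟨Set.insert_subset (Ihat.mem_of_last_mem hlX) hsub, ?_,
    Set.mem_insert_of_mem _ huniv⟩
  rintro I (rfl | hI) J (rfl | hJ)
  exacts [Or.inl subset_rfl, hXcomp J hJ, (hXcomp I hI).symm, hcomp I hI J hJ]

end IsNestedSet

namespace IsMaxNestedSet

variable {n : ℕ} {N : Set (Finset (Fin (n + 1)))} {J X : Finset (Fin (n + 1))}

lemma mem_of_forall_comparable (hN : IsMaxNestedSet n N) (hlX : Fin.last n ∈ X)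
    (hX : ∀ J ∈ N, J ⊆ X ∨ X ⊆ J) : X ∈ N :=
  hN.2 _ (hN.1.insert hlX hX) (Set.subset_insert X N) ▸ Set.mem_insert X N

/-- Fill the gap between `J` and the smallest member of `N` above it by one point; the resulting
set is comparable with every member of `N`, so maximality puts it in `N`. -/
lemma exists_card_eq_succ (hN : IsMaxNestedSet n N) (hJ : J ∈ N) (hlJ : Fin.last n ∈ J)
    (hcard : J.card ≤ n) : ∃ K ∈ N, Fin.last n ∈ K ∧ K.card = J.card + 1 := by
  have huniv : (univ : Finset (Fin (n + 1))) ∈ N := (isNestedSet_iff.mp hN.1).2.2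
  obtain ⟨K, ⟨hKN, hlK, hJK⟩, hKmin⟩ := Set.exists_min_image
    {K | K ∈ N ∧ Fin.last n ∈ K ∧ J.card < K.card} card (Set.toFinite _)
    ⟨univ, huniv, mem_univ _, by simpa using hcard.trans_lt n.lt_succ_self⟩
  obtain ⟨x, hxK, hxJ⟩ := exists_mem_notMem_of_card_lt_card hJK
  have hJsubK := hN.1.subset_of_card_le hJ hKN hlJ hJK.le
  refine ⟨insert x J, hN.mem_of_forall_comparable (mem_insert_of_mem hlJ) fun L hL => ?_,
    mem_insert_of_mem hlJ, card_insert_of_notMem hxJ⟩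
  by_cases hlL : Fin.last n ∈ L
  · rcases le_or_gt L.card J.card with hLJ | hJL
    · exact Or.inl ((hN.1.subset_of_card_le hL hJ hlL hLJ).trans (subset_insert x J))
    · exact Or.inr ((insert_subset hxK hJsubK).trans
        (hN.1.subset_of_card_le hKN hL hlK (hKmin L ⟨hL, hlL, hJL⟩)))
  · exact Or.inl ((hN.1.subset_of_last_notMem hL hJ hlL hlJ).trans (subset_insert x J))

lemma exists_card_eq (hN : IsMaxNestedSet n N) (hJ : J ∈ N) (hlJ : Fin.last n ∈ J) {c : ℕ}
    (hJc : J.card ≤ c) (hc : c ≤ n + 1) : ∃ K ∈ N, Fin.last n ∈ K ∧ K.card = c := by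
  induction c, hJc using Nat.le_induction with
  | base => exact ⟨J, hJ, hlJ, rfl⟩
  | succ c _ ih =>
    obtain ⟨K, hKN, hlK, rfl⟩ := ih (by omega)
    exact hN.exists_card_eq_succ hKN hlK (by omega)

end IsMaxNestedSet

/-- The shape in the statement; the paper's `I_{j+1}` is `I j`. -/
def IsChainWithSingletons (n k : ℕ) (hk : k ≤ n) (I : Fin (n + 1) → Finset (Fin (n + 1))) :
    Prop :=
  (∀ j : Fin (n + 1), (j : ℕ) < k → ∃ i : Fin (n + 1), i ≠ Fin.last n ∧ I j = {i}) ∧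
  I ⟨k, Nat.lt_succ_of_le hk⟩ =
    insert (Fin.last n) ((univ.filter (fun j : Fin (n + 1) => (j : ℕ) < k)).sup I) ∧
  ∀ (j : ℕ) (_ : k ≤ j) (h2 : j < n),
    I ⟨j, Nat.lt_succ_of_lt h2⟩ ⊂ I ⟨j + 1, Nat.succ_lt_succ h2⟩ ∧
      (I ⟨j + 1, Nat.succ_lt_succ h2⟩ \ I ⟨j, Nat.lt_succ_of_lt h2⟩).card = 1

namespace IsChainWithSingletons

variable {n k : ℕ} {hk : k ≤ n} {I : Fin (n + 1) → Finset (Fin (n + 1))}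
  (hI : IsChainWithSingletons n k hk I)
include hI

lemma last_notMem_of_lt {a : Fin (n + 1)} (ha : (a : ℕ) < k) : Fin.last n ∉ I a := by
  obtain ⟨i, hi, h⟩ := hI.1 a ha
  simpa [h] using hi.symm

lemma last_notMem_sup :
    Fin.last n ∉ (univ.filter (fun j : Fin (n + 1) => (j : ℕ) < k)).sup I := by
  simp only [mem_sup, mem_filter, mem_univ, true_and, not_exists, not_and]
  exact fun a ha => hI.last_notMem_of_lt ha

lemma subset_root {a : Fin (n + 1)} (ha : (a : ℕ) < k) : I a ⊆ I ⟨k, Nat.lt_succ_of_le hk⟩ := by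
  rw [hI.2.1]
  exact (le_sup (f := I) (mem_filter.mpr ⟨mem_univ a, ha⟩)).trans (subset_insert _ _)

lemma subset_of_le {a b : Fin (n + 1)} (ha : k ≤ (a : ℕ)) (hab : a ≤ b) : I a ⊆ I b := by
  obtain ⟨b, hb⟩ := b
  change (a : ℕ) ≤ b at hab
  induction b, hab using Nat.le_induction with
  | base => exact subset_rfl
  | succ b hab ih => exact (ih (by omega)).trans (hI.2.2 b (ha.trans hab) (by omega)).1.subset

lemma root_subset {a : Fin (n + 1)} (ha : k ≤ (a : ℕ)) : I ⟨k, Nat.lt_succ_of_le hk⟩ ⊆ I a :=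
  hI.subset_of_le le_rfl ha

lemma last_mem {a : Fin (n + 1)} (ha : k ≤ (a : ℕ)) : Fin.last n ∈ I a :=
  hI.root_subset ha (hI.2.1 ▸ mem_insert_self _ _)

lemma card_sup (hinj : Function.Injective I) :
    ((univ.filter (fun j : Fin (n + 1) => (j : ℕ) < k)).sup I).card = k := by
  classical
  have hone : ∀ a ∈ univ.filter (fun j : Fin (n + 1) => (j : ℕ) < k), (I a).card = 1 :=
    fun a ha => by obtain ⟨i, -, h⟩ := hI.1 a (mem_filter.mp ha).2; simp [h]
  rw [sup_eq_biUnion, card_biUnion, sum_congr rfl hone, sum_const, smul_eq_mul, mul_one,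
    Fin.card_filter_val_lt, min_eq_right (by omega)]
  intro a ha b hb hab
  obtain ⟨i, -, hia⟩ := hI.1 a (mem_filter.mp ha).2
  obtain ⟨j, -, hjb⟩ := hI.1 b (mem_filter.mp hb).2
  rw [Function.onFun, hia, hjb, disjoint_singleton]
  rintro rfl
  exact hab (hinj (hia.trans hjb.symm))

lemma card_eq (hinj : Function.Injective I) {a : Fin (n + 1)} (ha : k ≤ (a : ℕ)) :
    (I a).card = a + 1 := by
  classical
  obtain ⟨a, ha'⟩ := a
  change k ≤ a at ha
  induction a, ha using Nat.le_induction with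
  | base => rw [hI.2.1, card_insert_of_notMem hI.last_notMem_sup, hI.card_sup hinj]
  | succ a ha ih =>
    obtain ⟨hss, hdiff⟩ := hI.2.2 a ha (by omega)
    have := card_sdiff_add_card_eq_card hss.subset
    rw [hdiff, ih (by omega)] at this
    exact this.symm.trans (add_comm _ _)

lemma last_eq_univ (hinj : Function.Injective I) : I (Fin.last n) = univ :=
  eq_univ_of_card _ (by simpa using hI.card_eq hinj (a := Fin.last n) (by simpa using hk))

theorem isNestedSet_range (hinj : Function.Injective I) : IsNestedSet n (Set.range I) := by
  refine isNestedSet_iff.mpr ⟨?_, ?_, hI.last_eq_univ hinj ▸ Set.mem_range_self _⟩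
  · rintro _ ⟨a, rfl⟩
    rcases lt_or_ge (a : ℕ) k with ha | ha
    · exact Or.inl (hI.1 a ha)
    · exact Ihat.mem_of_last_mem (hI.last_mem ha)
  rintro _ ⟨a, rfl⟩ _ ⟨b, rfl⟩
  rcases lt_or_ge (a : ℕ) k with ha | ha <;> rcases lt_or_ge (b : ℕ) k with hb | hb
  · obtain ⟨i, hi, hia⟩ := hI.1 a ha
    obtain ⟨j, hj, hjb⟩ := hI.1 b hb
    rw [hia, hjb]
    obtain rfl | hij := eq_or_ne i j
    · exact Or.inl subset_rfl
    · exact Or.inr (Or.inr ⟨disjoint_singleton.mpr hij, by simpa using hi.symm,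
        by simpa using hj.symm⟩)
  · exact Or.inl ((hI.subset_root ha).trans (hI.root_subset hb))
  · exact Or.inr (Or.inl ((hI.subset_root hb).trans (hI.root_subset ha)))
  · rcases le_total a b with hab | hab
    exacts [Or.inl (hI.subset_of_le ha hab), Or.inr (Or.inl (hI.subset_of_le hb hab))]

theorem eq_range_of_range_subset (hinj : Function.Injective I)
    {N : Set (Finset (Fin (n + 1)))} (hN : IsNestedSet n N) (hsub : Set.range I ⊆ N) :
    N = Set.range I := by
  refine Set.Subset.antisymm (fun J hJ => ?_) hsub
  have hroot : I ⟨k, Nat.lt_succ_of_le hk⟩ ∈ N := hsub (Set.mem_range_self _)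
  by_cases hlJ : Fin.last n ∈ J
  · have hrootJ : I ⟨k, Nat.lt_succ_of_le hk⟩ ⊆ J := by
      rw [hI.2.1]
      refine insert_subset hlJ (Finset.sup_le fun a ha => ?_)
      exact hN.subset_of_last_notMem (hsub (Set.mem_range_self a)) hJ
        (hI.last_notMem_of_lt (mem_filter.mp ha).2) hlJ
    have hkJ : k + 1 ≤ J.card :=
      hI.card_eq hinj (a := ⟨k, Nat.lt_succ_of_le hk⟩) le_rfl ▸ card_le_card hrootJ
    have hJn : J.card ≤ n + 1 := by simpa using card_le_univ J
    have hka : k ≤ J.card - 1 := by omega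
    refine ⟨⟨J.card - 1, by omega⟩, hN.eq_of_card_eq (hsub (Set.mem_range_self _)) hJ
      (hI.last_mem hka) ?_⟩
    rw [hI.card_eq hinj hka, Fin.val_mk]
    omega
  · obtain ⟨i, hi, rfl⟩ := Ihat.eq_singleton_of_last_notMem ((isNestedSet_iff.mp hN).1 hJ) hlJ
    have hik : i ∈ I ⟨k, Nat.lt_succ_of_le hk⟩ :=
      hN.subset_of_last_notMem hJ hroot hlJ (hI.last_mem le_rfl) (mem_singleton_self i)
    rw [hI.2.1, mem_insert, mem_sup] at hik
    obtain ⟨a, ha, hia⟩ := hik.resolve_left hi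
    obtain ⟨i', -, h⟩ := hI.1 a (mem_filter.mp ha).2
    rw [h, mem_singleton] at hia
    exact ⟨a, hia ▸ h⟩

end IsChainWithSingletons

section chainWithSingletons

variable {n : ℕ} (S : Finset (Fin (n + 1))) (C : ℕ → Finset (Fin (n + 1)))

def chainWithSingletons (j : Fin (n + 1)) : Finset (Fin (n + 1)) :=
  if h : (j : ℕ) < S.card then {S.orderEmbOfFin rfl ⟨j, h⟩} else C (j + 1)

variable {S C}

lemma chainWithSingletons_of_lt {j : Fin (n + 1)} (h : (j : ℕ) < S.card) :
    chainWithSingletons S C j = {S.orderEmbOfFin rfl ⟨j, h⟩} :=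
  dif_pos h

lemma chainWithSingletons_of_ge {j : Fin (n + 1)} (h : S.card ≤ (j : ℕ)) :
    chainWithSingletons S C j = C (j + 1) :=
  dif_neg h.not_gt

lemma sup_chainWithSingletons :
    (univ.filter (fun j : Fin (n + 1) => (j : ℕ) < S.card)).sup (chainWithSingletons S C) = S := by
  ext x
  simp only [mem_sup, mem_filter, mem_univ, true_and]
  constructor
  · rintro ⟨j, hj, hx⟩
    rw [chainWithSingletons_of_lt hj, mem_singleton] at hx
    exact hx ▸ S.orderEmbOfFin_mem rfl _
  · intro hx
    obtain ⟨⟨j, hj⟩, rfl⟩ : x ∈ Set.range (S.orderEmbOfFin rfl) := by rwa [range_orderEmbOfFin]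
    refine ⟨⟨j, hj.trans_le ((card_le_univ S).trans_eq (Fintype.card_fin _))⟩, hj, ?_⟩
    rw [chainWithSingletons_of_lt hj]
    exact mem_singleton_self _

variable (hS : Fin.last n ∉ S)
  (hC : ∀ c, S.card < c → c ≤ n + 1 → Fin.last n ∈ C c ∧ (C c).card = c)
include hS hC

lemma injective_chainWithSingletons : Function.Injective (chainWithSingletons S C) := by
  have hs : ∀ j, S.orderEmbOfFin rfl j ≠ Fin.last n :=
    fun j h => hS (h ▸ S.orderEmbOfFin_mem rfl j)
  intro a b hab
  rcases lt_or_ge (a : ℕ) S.card with ha | ha <;> rcases lt_or_ge (b : ℕ) S.card with hb | hb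
  · rw [chainWithSingletons_of_lt ha, chainWithSingletons_of_lt hb, singleton_inj] at hab
    exact Fin.ext (Fin.mk.inj_iff.mp ((S.orderEmbOfFin rfl).injective hab))
  · have := (hC (b + 1) (by omega) (by omega)).1
    rw [← chainWithSingletons_of_ge (C := C) hb, ← hab, chainWithSingletons_of_lt ha,
      mem_singleton] at this
    exact absurd this.symm (hs _)
  · have := (hC (a + 1) (by omega) (by omega)).1
    rw [← chainWithSingletons_of_ge (C := C) ha, hab, chainWithSingletons_of_lt hb,
      mem_singleton] at this
    exact absurd this.symm (hs _)
  · have := (hC (a + 1) (by omega) (by omega)).2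
    rw [← chainWithSingletons_of_ge (C := C) ha, hab, chainWithSingletons_of_ge hb,
      (hC (b + 1) (by omega) (by omega)).2] at this
    exact Fin.ext (by omega)

lemma isChainWithSingletons_chainWithSingletons (hk : S.card ≤ n)
    (hCmono : ∀ c, S.card < c → c ≤ n → C c ⊆ C (c + 1))
    (hCroot : C (S.card + 1) = insert (Fin.last n) S) :
    IsChainWithSingletons n S.card hk (chainWithSingletons S C) := by
  refine ⟨fun j h => ⟨_, fun he => hS (he ▸ S.orderEmbOfFin_mem rfl _),
    chainWithSingletons_of_lt h⟩, ?_, fun j h1 h2 => ?_⟩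
  · rw [chainWithSingletons_of_ge (j := ⟨S.card, _⟩) le_rfl, sup_chainWithSingletons]
    exact hCroot
  rw [chainWithSingletons_of_ge (j := ⟨j, _⟩) h1,
    chainWithSingletons_of_ge (j := ⟨j + 1, _⟩) (by simp only; omega)]
  have hsub := hCmono (j + 1) (by omega) (by omega)
  have hcard₁ := (hC (j + 1) (by omega) (by omega)).2
  have hcard₂ := (hC (j + 1 + 1) (by omega) (by omega)).2
  refine ⟨Finset.ssubset_iff_subset_ne.mpr ⟨hsub, fun h => ?_⟩, ?_⟩
  · rw [h, hcard₂] at hcard₁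
    omega
  · rw [card_sdiff_of_subset hsub, hcard₁, hcard₂]
    omega

end chainWithSingletons

section singletonPoints

variable {n : ℕ} {N : Set (Finset (Fin (n + 1)))}

open Classical in
noncomputable def singletonPoints (N : Set (Finset (Fin (n + 1)))) : Finset (Fin (n + 1)) :=
  univ.filter fun i => i ≠ Fin.last n ∧ {i} ∈ N

lemma mem_singletonPoints {i : Fin (n + 1)} : i ∈ singletonPoints N ↔ i ≠ Fin.last n ∧ {i} ∈ N := by
  simp [singletonPoints]

lemma last_notMem_singletonPoints : Fin.last n ∉ singletonPoints N := by
  simp [mem_singletonPoints]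

lemma IsMaxNestedSet.insert_last_singletonPoints_mem (hN : IsMaxNestedSet n N) :
    insert (Fin.last n) (singletonPoints N) ∈ N := by
  refine hN.mem_of_forall_comparable (mem_insert_self _ _) fun J hJ => ?_
  by_cases hlJ : Fin.last n ∈ J
  · refine Or.inr (insert_subset hlJ fun i hi => ?_)
    obtain ⟨hil, hiN⟩ := mem_singletonPoints.mp hi
    exact hN.1.subset_of_last_notMem hiN hJ (mem_singleton.not.mpr hil.symm) hlJ
      (mem_singleton_self i)
  · obtain ⟨i, hi, rfl⟩ := Ihat.eq_singleton_of_last_notMem ((isNestedSet_iff.mp hN.1).1 hJ) hlJ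
    exact Or.inl (singleton_subset_iff.mpr (mem_insert_of_mem (mem_singletonPoints.mpr ⟨hi, hJ⟩)))

theorem IsMaxNestedSet.exists_isChainWithSingletons (hN : IsMaxNestedSet n N) :
    ∃ (k : ℕ) (hk : k ≤ n) (I : Fin (n + 1) → Finset (Fin (n + 1))),
      Function.Injective I ∧ IsChainWithSingletons n k hk I ∧ Set.range I ⊆ N := by
  set S := singletonPoints N
  have hS : Fin.last n ∉ S := last_notMem_singletonPoints
  have hk : S.card ≤ n := Nat.lt_succ_iff.mp (by simpa using card_lt_univ_of_notMem hS)
  have hroot := hN.insert_last_singletonPoints_mem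
  have hrootcard : (insert (Fin.last n) S).card = S.card + 1 := card_insert_of_notMem hS
  choose! C hCN hlC hCcard using fun c (hc : S.card < c) (hcn : c ≤ n + 1) =>
    hN.exists_card_eq hroot (mem_insert_self _ _) (hrootcard ▸ hc) hcn
  have hC : ∀ c, S.card < c → c ≤ n + 1 → Fin.last n ∈ C c ∧ (C c).card = c :=
    fun c h1 h2 => ⟨hlC c h1 h2, hCcard c h1 h2⟩
  have hCmono : ∀ c, S.card < c → c ≤ n → C c ⊆ C (c + 1) := fun c h1 h2 =>
    hN.1.subset_of_card_le (hCN c h1 (by omega)) (hCN (c + 1) (by omega) (by omega))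
      (hlC c h1 (by omega))
      (by rw [hCcard c h1 (by omega), hCcard (c + 1) (by omega) (by omega)]; omega)
  have hCroot : C (S.card + 1) = insert (Fin.last n) S :=
    hN.1.eq_of_card_eq (hCN _ (by omega) (by omega)) hroot (hlC _ (by omega) (by omega))
      (by rw [hCcard (S.card + 1) (by omega) (by omega), hrootcard])
  refine ⟨S.card, hk, chainWithSingletons S C, injective_chainWithSingletons hS hC,
    isChainWithSingletons_chainWithSingletons hS hC hk hCmono hCroot, ?_⟩
  rintro _ ⟨j, rfl⟩
  rcases lt_or_ge (j : ℕ) S.card with hj | hj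
  · rw [chainWithSingletons_of_lt hj]
    exact (mem_singletonPoints.mp (S.orderEmbOfFin_mem rfl _)).2
  · rw [chainWithSingletons_of_ge hj]
    exact hCN _ (by omega) (by omega)

end singletonPoints

/-- The inclusion-maximal nested sets of `Î_n` are exactly those of the form
`{I_1,…,I_{n+1}}` where `I_1,…,I_k` are `k` distinct singletons of `[n]` (`0 ≤ k ≤ n`),
`I_{k+1} = I_1 ∪ ⋯ ∪ I_k ∪ {n+1}`, and `I_j ⊊ I_{j+1}` with `|I_{j+1} \ I_j| = 1`
thereafter. -/
theorem max_nested_sets_Ihat (n : ℕ) (N : Set (Finset (Fin (n + 1)))) :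
    IsMaxNestedSet n N ↔
      ∃ (k : ℕ) (hk : k ≤ n) (I : Fin (n + 1) → Finset (Fin (n + 1))),
        Function.Injective I ∧ N = Set.range I ∧
        (∀ j : Fin (n + 1), (j : ℕ) < k →
          ∃ i : Fin (n + 1), i ≠ Fin.last n ∧ I j = {i}) ∧
        I ⟨k, by omega⟩ =
          insert (Fin.last n)
            ((Finset.univ.filter (fun j : Fin (n + 1) => (j : ℕ) < k)).sup I) ∧
        (∀ (j : ℕ) (h1 : k ≤ j) (h2 : j < n),
          I ⟨j, by omega⟩ ⊂ I ⟨j + 1, by omega⟩ ∧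
          (I ⟨j + 1, by omega⟩ \ I ⟨j, by omega⟩).card = 1) := by
  constructor
  · intro hN
    obtain ⟨k, hk, I, hinj, hI, hsub⟩ := hN.exists_isChainWithSingletons
    exact ⟨k, hk, I, hinj, hI.eq_range_of_range_subset hinj hN.1 hsub, hI⟩
  · rintro ⟨k, hk, I, hinj, rfl, hI⟩
    replace hI : IsChainWithSingletons n k hk I := hI
    exact ⟨hI.isNestedSet_range hinj, fun N' hN' hsub => hI.eq_range_of_range_subset hinj hN' hsub⟩
end

section
/- Every maximal nested set of the building set Î_n = {{i} : i ∈ [n]} ∪ {J ∪ {n+1} : J ⊆ [n]} has exactly n+1 elements, and the number of maximal nested sets is Σ_{i=0}^{n} n!/i!. -/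
open Finset

section Enumeration

variable {α β : Type*} [LinearOrder β]

lemma Finset.exists_enum_monotone (D : Finset α) (g : α → β) :
    ∃ f : Fin #D → α, Function.Injective f ∧ Set.range f = D ∧ Monotone (g ∘ f) := by
  let e := D.equivFin.symm
  let σ := Tuple.sort (g ∘ Subtype.val ∘ e)
  refine ⟨Subtype.val ∘ e ∘ σ, Subtype.val_injective.comp (e.injective.comp σ.injective), ?_,
    Tuple.monotone_sort (g ∘ Subtype.val ∘ e)⟩
  simp [Set.range_comp]

end Enumeration

lemma sum_descFactorial_eq_sum_div (n : ℕ) :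
    ∑ k : Fin (n + 1), n.descFactorial k = ∑ i ∈ range (n + 1), n.factorial / i.factorial := by
  rw [Fin.sum_univ_eq_sum_range (n.descFactorial ·), ← sum_range_reflect]
  refine sum_congr rfl fun k hk => ?_
  have hkn : k ≤ n := Nat.lt_succ_iff.1 (mem_range.1 hk)
  rw [Nat.add_sub_cancel, Nat.descFactorial_eq_div (n.sub_le k), Nat.sub_sub_self hkn]

section NestedSets

variable {n : ℕ} {N : Set (Finset (Fin (n + 1)))} {S T : Finset (Fin (n + 1))}

lemma exists_eq_singleton_of_mem_Ihat (hS : S ∈ Ihat n) (hlast : Fin.last n ∉ S) :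
    ∃ i : Fin n, S = {i.castSucc} := by
  rcases hS with ⟨i, hi, rfl⟩ | h
  · exact ⟨i.castPred hi, by simp⟩
  · exact absurd h hlast

lemma nonempty_of_mem_Ihat (hS : S ∈ Ihat n) : S.Nonempty := by
  rcases hS with ⟨i, -, rfl⟩ | h
  exacts [singleton_nonempty i, ⟨_, h⟩]

namespace IsNestedSet

lemma subset_or_subset (hN : IsNestedSet n N) (hS : S ∈ N) (hT : T ∈ N)
    (hSl : Fin.last n ∈ S) (hTl : Fin.last n ∈ T) : S ⊆ T ∨ T ⊆ S := by
  rcases hN.2.1 S hS T hT with h | h | h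
  · exact Or.inl h
  · exact Or.inr h
  · simpa [h] using mem_inter.2 ⟨hSl, hTl⟩

lemma subset_of_last_notMem_s15 (hN : IsNestedSet n N) (hS : S ∈ N) (hT : T ∈ N)
    (hSl : Fin.last n ∉ S) (hTl : Fin.last n ∈ T) : S ⊆ T := by
  obtain ⟨i, rfl⟩ := exists_eq_singleton_of_mem_Ihat (hN.1 hS) hSl
  rw [singleton_subset_iff]
  by_contra hi
  have hne : {i.castSucc} ≠ T := by rintro rfl; exact hSl hTl
  refine hN.2.2.1 {{i.castSucc}, T} ?_ (card_pair hne).ge ?_ (Or.inr ?_)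
  · simp [Set.insert_subset_iff, hS, hT]
  · simp [hi, inter_comm]
  · simp [hTl]

end IsNestedSet

lemma isNestedSet_of (hIhat : N ⊆ Ihat n) (huniv : univ ∈ N)
    (hchain : ∀ S ∈ N, ∀ T ∈ N, Fin.last n ∈ S → Fin.last n ∈ T → S ⊆ T ∨ T ⊆ S)
    (hsub : ∀ S ∈ N, ∀ T ∈ N, Fin.last n ∉ S → Fin.last n ∈ T → S ⊆ T) :
    IsNestedSet n N := by
  refine ⟨hIhat, fun I hI J hJ => ?_, fun C hC hcard hdisj hsup => ?_, fun I _ hmax => ?_⟩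
  · by_cases hIl : Fin.last n ∈ I <;> by_cases hJl : Fin.last n ∈ J
    · exact (hchain I hI J hJ hIl hJl).imp_right Or.inl
    · exact Or.inr (Or.inl (hsub J hJ I hI hJl hIl))
    · exact Or.inl (hsub I hI J hJ hIl hJl)
    · obtain ⟨a, rfl⟩ := exists_eq_singleton_of_mem_Ihat (hIhat hI) hIl
      obtain ⟨b, rfl⟩ := exists_eq_singleton_of_mem_Ihat (hIhat hJ) hJl
      by_cases hab : a = b <;> simp [hab]
  · rcases hsup with ⟨i, -, hi⟩ | hlast
    · have hCi : ∀ S ∈ C, S = {i} := fun S hS =>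
        (subset_singleton_iff.1 (hi ▸ le_sup (f := id) hS)).resolve_left
          (nonempty_of_mem_Ihat (hIhat (hC hS))).ne_empty
      have := card_le_one.2 fun S hS T hT => (hCi S hS).trans (hCi T hT).symm
      omega
    · obtain ⟨S, hS, hSl⟩ := mem_sup.1 hlast
      obtain ⟨T, hT, hTS⟩ := (one_lt_card_iff_nontrivial.1 hcard).exists_ne S
      have hTS' : (T ∩ S).Nonempty := by
        by_cases hTl : Fin.last n ∈ T
        · exact ⟨_, mem_inter.2 ⟨hTl, hSl⟩⟩
        · rw [inter_eq_left.2 (hsub T (hC hT) S (hC hS) hTl hSl)]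
          exact nonempty_of_mem_Ihat (hIhat (hC hT))
      simp [hdisj T hT S hS hTS] at hTS'
  · rwa [hmax univ (Or.inr (mem_univ _)) (subset_univ I)]

variable {k : ℕ}

def chainSet (f : Fin k → Fin n) (j : ℕ) : Finset (Fin (n + 1)) :=
  univ \ ({t | (t : ℕ) < j} : Finset (Fin k)).image fun t => (f t).castSucc

def stdNestedSet (f : Fin k → Fin n) : Finset (Finset (Fin (n + 1))) :=
  (range (k + 1)).image (chainSet f) ∪ (univ \ univ.image f).image fun i => {i.castSucc}

section chainSet

variable {f : Fin k → Fin n} {j : ℕ}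

lemma mem_chainSet {x : Fin (n + 1)} :
    x ∈ chainSet f j ↔ ∀ t : Fin k, (t : ℕ) < j → (f t).castSucc ≠ x := by
  simp [chainSet]

lemma last_mem_chainSet : Fin.last n ∈ chainSet f j :=
  mem_chainSet.2 fun t _ => Fin.castSucc_ne_last (f t)

lemma castSucc_mem_chainSet {i : Fin n} (hi : i ∉ Set.range f) : i.castSucc ∈ chainSet f j :=
  mem_chainSet.2 fun t _ h => hi ⟨t, Fin.castSucc_injective n h⟩

lemma chainSet_zero : chainSet f 0 = univ := by
  simp [chainSet]

lemma chainSet_antitone : Antitone (chainSet f) := fun _ _ hjj' _ hx =>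
  mem_chainSet.2 fun t ht => mem_chainSet.1 hx t (ht.trans_le hjj')

lemma card_chainSet (hf : Function.Injective f) (hj : j ≤ k) : #(chainSet f j) = n + 1 - j := by
  rw [chainSet, card_sdiff_of_subset (subset_univ _), card_univ, Fintype.card_fin,
    card_image_of_injective _ fun _ _ h => hf (Fin.castSucc_injective n h), Fin.card_filter_val_lt,
    min_eq_right hj]

lemma chainSet_sdiff_succ (hf : Function.Injective f) (t : Fin k) :
    chainSet f t \ chainSet f (t + 1) = {(f t).castSucc} := by
  ext x
  simp only [mem_sdiff, mem_chainSet, mem_singleton]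
  push Not
  constructor
  · rintro ⟨hlt, s, hs, rfl⟩
    obtain rfl : s = t := Fin.ext (by by_contra hne; exact hlt s (by omega) rfl)
    rfl
  · rintro rfl
    exact ⟨fun s hs h => hs.ne (congrArg Fin.val (hf (Fin.castSucc_injective n h))), t,
      Nat.lt_succ_self t, rfl⟩

lemma eq_of_chainSet_eq {k' : ℕ} {f' : Fin k' → Fin n} {j' : ℕ} (hf : Function.Injective f)
    (hf' : Function.Injective f') (hj : j ≤ k) (hj' : j' ≤ k')
    (h : chainSet f j = chainSet f' j') : j = j' := by
  have := congrArg card h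
  rw [card_chainSet hf hj, card_chainSet hf' hj'] at this
  have := Fin.le_of_injective f hf
  have := Fin.le_of_injective f' hf'
  omega

lemma exists_chainSet_eq (hf : Function.Injective f) {S : Finset (Fin (n + 1))}
    (hlast : Fin.last n ∈ S) (hcompl : ∀ i ∉ Set.range f, i.castSucc ∈ S)
    (hup : ∀ s t, s ≤ t → (f s).castSucc ∈ S → (f t).castSucc ∈ S) :
    ∃ j ≤ k, chainSet f j = S := by
  classical
  have hlower : ∀ t : Fin k, (t : ℕ) < #{t | (f t).castSucc ∉ S} ↔ (f t).castSucc ∉ S :=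
    fun t => Fin.lt_card_filter_univ_iff_apply_of_imp _ fun s t hts hs ht => hs (hup t s hts ht)
  refine ⟨#{t | (f t).castSucc ∉ S}, (card_le_univ _).trans (Fintype.card_fin k).le, ?_⟩
  ext x
  rw [mem_chainSet]
  induction x using Fin.lastCases with
  | last => simp [hlast, Fin.castSucc_ne_last]
  | cast i =>
    by_cases hi : i ∈ Set.range f
    · obtain ⟨s, rfl⟩ := hi
      simp only [ne_eq, Fin.castSucc_inj, hf.eq_iff]
      constructor
      · intro h
        by_contra hs
        exact h s ((hlower s).2 hs) rfl
      · rintro hs t ht rfl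
        exact (hlower t).1 ht hs
    · simp only [hcompl i hi, iff_true]
      exact fun t _ h => hi ⟨t, Fin.castSucc_injective n h⟩

end chainSet

section stdNestedSet

variable {f : Fin k → Fin n} {S : Finset (Fin (n + 1))}

lemma mem_stdNestedSet :
    S ∈ stdNestedSet f ↔ (∃ j ≤ k, chainSet f j = S) ∨ ∃ i ∉ Set.range f, {i.castSucc} = S := by
  simp [stdNestedSet]

lemma isNestedSet_stdNestedSet (f : Fin k → Fin n) : IsNestedSet n (stdNestedSet f) := by
  have hchain : ∀ S ∈ stdNestedSet f, Fin.last n ∈ S → ∃ j, chainSet f j = S := by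
    intro S hS hSl
    rcases mem_stdNestedSet.1 hS with ⟨j, -, rfl⟩ | ⟨i, -, rfl⟩
    · exact ⟨j, rfl⟩
    · exact absurd (mem_singleton.1 hSl).symm (Fin.castSucc_ne_last i)
  refine isNestedSet_of (fun S hS => ?_) (mem_stdNestedSet.2 (Or.inl ⟨0, k.zero_le, chainSet_zero⟩))
    (fun S hS T hT hSl hTl => ?_) (fun S hS T hT hSl hTl => ?_)
  · rcases mem_stdNestedSet.1 hS with ⟨j, -, rfl⟩ | ⟨i, -, rfl⟩
    · exact Or.inr last_mem_chainSet
    · exact Or.inl ⟨i.castSucc, Fin.castSucc_ne_last i, rfl⟩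
  · obtain ⟨j, rfl⟩ := hchain S hS hSl
    obtain ⟨j', rfl⟩ := hchain T hT hTl
    exact (le_total j' j).imp (fun h => chainSet_antitone h) (fun h => chainSet_antitone h)
  · rcases mem_stdNestedSet.1 hS with ⟨j, -, rfl⟩ | ⟨i, hi, rfl⟩
    · exact absurd last_mem_chainSet hSl
    · obtain ⟨j, rfl⟩ := hchain T hT hTl
      exact singleton_subset_iff.2 (castSucc_mem_chainSet hi)

lemma card_stdNestedSet (hf : Function.Injective f) : #(stdNestedSet f) = n + 1 := by
  have hdisj : Disjoint ((range (k + 1)).image (chainSet f))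
      ((univ \ univ.image f).image fun i => ({i.castSucc} : Finset (Fin (n + 1)))) := by
    simp only [disjoint_left, mem_image]
    rintro _ ⟨j, -, rfl⟩ ⟨i, -, hi⟩
    have := hi ▸ (last_mem_chainSet : Fin.last n ∈ chainSet f j)
    exact Fin.castSucc_ne_last i (mem_singleton.1 this).symm
  have hinj : Set.InjOn (chainSet f) (range (k + 1)) := fun j hj j' hj' h =>
    eq_of_chainSet_eq hf hf (by simpa [Nat.lt_succ_iff] using hj)
      (by simpa [Nat.lt_succ_iff] using hj') h
  rw [stdNestedSet, card_union_of_disjoint hdisj, card_image_of_injOn hinj,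
    card_image_of_injective _ fun _ _ h => Fin.castSucc_injective n (singleton_injective h),
    card_sdiff_of_subset (subset_univ _), card_image_of_injective _ hf, card_range]
  simp only [card_univ, Fintype.card_fin]
  have := Fin.le_of_injective f hf
  omega

end stdNestedSet

noncomputable def chainDepth (N : Set (Finset (Fin (n + 1)))) (x : Fin (n + 1)) : ℕ :=
  {S ∈ N | Fin.last n ∈ S ∧ x ∈ S}.ncard

lemma IsNestedSet.chainDepth_lt (hN : IsNestedSet n N) (hT : T ∈ N) (hTl : Fin.last n ∈ T)
    {x y : Fin (n + 1)} (hx : x ∈ T) (hy : y ∉ T) : chainDepth N y < chainDepth N x := by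
  refine Set.ncard_lt_ncard ⟨fun S ⟨hS, hSl, hyS⟩ => ⟨hS, hSl, ?_⟩,
    fun h => hy (h ⟨hT, hTl, hx⟩).2.2⟩ (Set.toFinite _)
  rcases hN.subset_or_subset hS hT hSl hTl with h | h
  · exact absurd (h hyS) hy
  · exact h hx

theorem IsNestedSet.exists_subset_stdNestedSet (hN : IsNestedSet n N) :
    ∃ (k : ℕ) (f : Fin k → Fin n), Function.Injective f ∧ N ⊆ stdNestedSet f := by
  classical
  let D : Finset (Fin n) := {i | ∃ T ∈ N, Fin.last n ∈ T ∧ i.castSucc ∉ T}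
  obtain ⟨f, hf, hrange, hmono⟩ :=
    D.exists_enum_monotone fun i => chainDepth N i.castSucc
  have hD : ∀ i, i ∈ Set.range f ↔ ∃ T ∈ N, Fin.last n ∈ T ∧ i.castSucc ∉ T := fun i => by
    simp [hrange, D]
  refine ⟨_, f, hf, fun S hS => mem_stdNestedSet.2 ?_⟩
  by_cases hSl : Fin.last n ∈ S
  · refine Or.inl (exists_chainSet_eq hf hSl (fun i hi => ?_) fun s t hst hs => ?_)
    · by_contra hiS
      exact hi ((hD i).2 ⟨S, hS, hSl, hiS⟩)
    · by_contra ht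
      exact (hN.chainDepth_lt hS hSl hs ht).not_ge (hmono hst)
  · obtain ⟨i, rfl⟩ := exists_eq_singleton_of_mem_Ihat (hN.1 hS) hSl
    refine Or.inr ⟨i, fun hi => ?_, rfl⟩
    obtain ⟨T, hT, hTl, hiT⟩ := (hD i).1 hi
    exact hiT (singleton_subset_iff.1 (hN.subset_of_last_notMem_s15 hS hT hSl hTl))

theorem isMaxNestedSet_stdNestedSet {f : Fin k → Fin n} (hf : Function.Injective f) :
    IsMaxNestedSet n (stdNestedSet f) := by
  refine ⟨isNestedSet_stdNestedSet f, fun N hN hsub => ?_⟩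
  obtain ⟨k', f', hf', hN'⟩ := hN.exists_subset_stdNestedSet
  have heq : stdNestedSet f = stdNestedSet f' :=
    eq_of_subset_of_card_le (coe_subset.1 (hsub.trans hN'))
      (by rw [card_stdNestedSet hf, card_stdNestedSet hf'])
  exact hsub.antisymm' (heq ▸ hN')

theorem IsMaxNestedSet.exists_eq_stdNestedSet (hN : IsMaxNestedSet n N) :
    ∃ (k : ℕ) (f : Fin k → Fin n), Function.Injective f ∧ ↑(stdNestedSet f) = N := by
  obtain ⟨k, f, hf, hsub⟩ := hN.1.exists_subset_stdNestedSet
  exact ⟨k, f, hf, hN.2 _ (isNestedSet_stdNestedSet f) hsub⟩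

lemma chainSet_eq_of_stdNestedSet_eq {k' : ℕ} {f : Fin k → Fin n} {f' : Fin k' → Fin n}
    (hf : Function.Injective f) (hf' : Function.Injective f')
    (h : stdNestedSet f = stdNestedSet f') {j : ℕ} (hj : j ≤ k) :
    j ≤ k' ∧ chainSet f' j = chainSet f j := by
  have hmem : chainSet f j ∈ stdNestedSet f' := h ▸ mem_stdNestedSet.2 (Or.inl ⟨j, hj, rfl⟩)
  rcases mem_stdNestedSet.1 hmem with ⟨j', hj', he⟩ | ⟨i, -, he⟩
  · obtain rfl := eq_of_chainSet_eq hf' hf hj' hj he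
    exact ⟨hj', he⟩
  · have := he ▸ (last_mem_chainSet : Fin.last n ∈ chainSet f j)
    exact absurd (mem_singleton.1 this).symm (Fin.castSucc_ne_last i)

lemma stdNestedSet_sigma_injective :
    Function.Injective fun p : Σ k : Fin (n + 1), Fin k ↪ Fin n =>
      (stdNestedSet p.2 : Set (Finset (Fin (n + 1)))) := by
  rintro ⟨k, f⟩ ⟨k', f'⟩ h
  replace h : stdNestedSet f = stdNestedSet f' := coe_inj.1 h
  obtain rfl : k = k' := Fin.ext <| le_antisymm
    (chainSet_eq_of_stdNestedSet_eq f.injective f'.injective h le_rfl).1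
    (chainSet_eq_of_stdNestedSet_eq f'.injective f.injective h.symm le_rfl).1
  obtain rfl : f = f' := DFunLike.ext _ _ fun t => by
    have hsdiff := chainSet_sdiff_succ f'.injective t
    rw [(chainSet_eq_of_stdNestedSet_eq f.injective f'.injective h t.isLt.le).2,
      (chainSet_eq_of_stdNestedSet_eq f.injective f'.injective h t.isLt).2,
      chainSet_sdiff_succ f.injective t] at hsdiff
    exact Fin.castSucc_injective n (singleton_injective hsdiff)
  rfl

lemma setOf_isMaxNestedSet_eq_range :
    {N | IsMaxNestedSet n N} = Set.range fun p : Σ k : Fin (n + 1), Fin k ↪ Fin n =>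
      (stdNestedSet p.2 : Set (Finset (Fin (n + 1)))) := by
  ext N
  constructor
  · intro hN
    obtain ⟨k, f, hf, rfl⟩ := hN.exists_eq_stdNestedSet
    exact ⟨⟨⟨k, Nat.lt_succ_of_le (Fin.le_of_injective f hf)⟩, ⟨f, hf⟩⟩, rfl⟩
  · rintro ⟨⟨k, f⟩, rfl⟩
    exact isMaxNestedSet_stdNestedSet f.injective

end NestedSets

/-- Every maximal nested set of `Î_n` has exactly `n+1` elements, and the number of maximal
nested sets is `Σ_{i=0}^{n} n!/i!`. -/
theorem max_nested_sets_count (n : ℕ) :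
    (∀ N, IsMaxNestedSet n N → N.ncard = n + 1) ∧
    {N : Set (Finset (Fin (n + 1))) | IsMaxNestedSet n N}.ncard =
      ∑ i ∈ Finset.range (n + 1), n.factorial / i.factorial := by
  constructor
  · intro N hN
    obtain ⟨k, f, hf, rfl⟩ := hN.exists_eq_stdNestedSet
    rw [Set.ncard_coe_finset, card_stdNestedSet hf]
  · rw [setOf_isMaxNestedSet_eq_range, ← Nat.card_coe_set_eq,
      Nat.card_range_of_injective stdNestedSet_sigma_injective, Nat.card_eq_fintype_card,
      Fintype.card_sigma]
    simp only [Fintype.card_embedding_eq, Fintype.card_fin]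
    exact sum_descFactorial_eq_sum_div n
end

section
/- For each 0 ≤ i ≤ n and each permutation π ∈ S_n, the point τ_i(π) ∈ ℝ^{n+1}, whose j-th coordinate (j ≤ n) is π(j) if π(j) > i and 0 otherwise, and whose (n+1)-st coordinate is C(i+1,2) = i(i+1)/2, lies in the Minkowski sum Q̄_n = Σ_{S ∈ I_n} Δ_S, where I_n = {S ∪ {n+1} : S ⊆ [n], 1 ≤ |S| ≤ 2} and Δ_S = conv{e_k : k ∈ S}. -/
open Pointwise

/-- `Δ_S = conv{e_k : k ∈ S} ⊆ ℝ^{n+1}`. -/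
def simplexFace (n : ℕ) (S : Finset (Fin (n + 1))) : Set (Fin (n + 1) → ℝ) :=
  convexHull ℝ {x | ∃ i ∈ S, x = Pi.single i (1 : ℝ)}

/-- The index collection `I_n = {S ∪ {n+1} : S ⊆ [n], 1 ≤ |S| ≤ 2}`. -/
def Isets (n : ℕ) : Finset (Finset (Fin (n + 1))) :=
  Finset.univ.filter (fun S => Fin.last n ∈ S ∧ 2 ≤ S.card ∧ S.card ≤ 3)

/-- The Minkowski sum `Q̄_n = Σ_{S ∈ I_n} Δ_S ⊆ ℝ^{n+1}`. -/
def Qbar (n : ℕ) : Set (Fin (n + 1) → ℝ) := ∑ S ∈ Isets n, simplexFace n S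

/-! Write `S ∈ I_n` as `{π⁻¹(u), π⁻¹(v), n+1}` with values `u ≤ v`; this indexes `I_n` by the
pairs `u ≤ v` in `[n]`. In `Δ_S` pick the vertex `e_{π⁻¹(v)}` if `v > i` and `e_{n+1}` otherwise.
The sum of the chosen vertices lies in `Q̄_n`, and since `v` is the larger value of exactly `v`
pairs, it is `τ_i(π)`: position `π⁻¹(v)` receives `v` when `v > i`, and the last coordinate
receives `1 + ⋯ + i = C(i+1,2)`. -/

open Finset

lemma sum_range_add_one_eq_choose_two (i : ℕ) : ∑ k ∈ range i, (k + 1) = (i + 1).choose 2 := by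
  rw [Nat.choose_two_right, ← Finset.sum_range_id, Finset.sum_range_succ']
  simp

lemma sum_single_mem_sum_simplexFace {n : ℕ} {ι : Type*} (s : Finset ι)
    (F : ι → Finset (Fin (n + 1))) (c : ι → Fin (n + 1)) (hc : ∀ k ∈ s, c k ∈ F k) :
    ∑ k ∈ s, Pi.single (c k) (1 : ℝ) ∈ ∑ k ∈ s, simplexFace n (F k) :=
  Set.finsetSum_mem_finsetSum _ _ _ fun k hk => subset_convexHull ℝ _ ⟨c k, hc k hk, rfl⟩

def lePairs (n : ℕ) : Finset (Fin n × Fin n) := univ.filter fun p => p.1 ≤ p.2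

lemma sum_lePairs_snd {n : ℕ} {M : Type*} [AddCommMonoid M] (f : Fin n → M) :
    ∑ p ∈ lePairs n, f p.2 = ∑ v : Fin n, ((v : ℕ) + 1) • f v := by
  rw [lePairs, sum_filter, Fintype.sum_prod_type, sum_comm]
  refine sum_congr rfl fun v _ => ?_
  rw [← sum_filter]
  simp only [sum_const, filter_ge_eq_Iic, Fin.card_Iic]

section pairFace

variable {n : ℕ} (σ : Equiv.Perm (Fin n))

def pairFace (p : Fin n × Fin n) : Finset (Fin (n + 1)) :=
  {(σ p.1).castSucc, (σ p.2).castSucc, Fin.last n}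

lemma pairFace_swap (p : Fin n × Fin n) : pairFace σ p.swap = pairFace σ p := by
  simp only [pairFace, Prod.fst_swap, Prod.snd_swap, insert_comm]

lemma castSucc_mem_pairFace {u : Fin n} {p : Fin n × Fin n} :
    (σ u).castSucc ∈ pairFace σ p ↔ u = p.1 ∨ u = p.2 := by
  simp [pairFace, (Fin.castSucc_lt_last _).ne]

lemma pairFace_mem_Isets (p : Fin n × Fin n) : pairFace σ p ∈ Isets n := by
  simp only [Isets, mem_filter, mem_univ, true_and]
  refine ⟨by simp [pairFace], ?_, card_le_three⟩
  exact one_lt_card.2 ⟨(σ p.1).castSucc, by simp [pairFace], Fin.last n, by simp [pairFace],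
    (Fin.castSucc_lt_last _).ne⟩

lemma pairFace_injOn : Set.InjOn (pairFace σ) (lePairs n) := by
  intro p hp q hq h
  simp only [lePairs, coe_filter, mem_univ, true_and, Set.mem_ofPred_eq] at hp hq
  have mem (u : Fin n) (r s : Fin n × Fin n) (hrs : pairFace σ r = pairFace σ s)
      (hu : u = r.1 ∨ u = r.2) : u = s.1 ∨ u = s.2 := by
    rw [← castSucc_mem_pairFace σ, ← hrs, castSucc_mem_pairFace]
    exact hu
  have h1 := mem p.1 p q h (.inl rfl)
  have h2 := mem p.2 p q h (.inr rfl)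
  have h3 := mem q.1 q p h.symm (.inl rfl)
  have h4 := mem q.2 q p h.symm (.inr rfl)
  simp only [Prod.ext_iff, Fin.ext_iff, Fin.le_def] at h1 h2 h3 h4 hp hq ⊢
  omega

lemma exists_castSucc_perm_eq {x : Fin (n + 1)} (hx : x ≠ Fin.last n) :
    ∃ u, (σ u).castSucc = x := by
  obtain ⟨k, rfl⟩ := Fin.exists_castSucc_eq.2 hx
  exact ⟨σ.symm k, by simp⟩

lemma exists_pairFace_eq {S : Finset (Fin (n + 1))} (hS : S ∈ Isets n) :
    ∃ p, pairFace σ p = S := by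
  simp only [Isets, mem_filter, mem_univ, true_and] at hS
  obtain ⟨hlast, h2, h3⟩ := hS
  have hS : S = insert (Fin.last n) (S.erase (Fin.last n)) := (insert_erase hlast).symm
  have hT := card_erase_of_mem hlast
  obtain hT1 | hT2 : #(S.erase (Fin.last n)) = 1 ∨ #(S.erase (Fin.last n)) = 2 := by omega
  · obtain ⟨a, ha⟩ := card_eq_one.1 hT1
    obtain ⟨u, rfl⟩ := exists_castSucc_perm_eq σ (ne_of_mem_erase (ha ▸ mem_singleton_self a))
    refine ⟨(u, u), ?_⟩
    rw [hS, ha]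
    ext x; simp [pairFace]; tauto
  · obtain ⟨a, b, -, hab⟩ := card_eq_two.1 hT2
    have ha : a ∈ S.erase (Fin.last n) := hab ▸ mem_insert_self a {b}
    have hb : b ∈ S.erase (Fin.last n) := hab ▸ mem_insert_of_mem (mem_singleton_self b)
    obtain ⟨u, rfl⟩ := exists_castSucc_perm_eq σ (ne_of_mem_erase ha)
    obtain ⟨v, rfl⟩ := exists_castSucc_perm_eq σ (ne_of_mem_erase hb)
    refine ⟨(u, v), ?_⟩
    rw [hS, hab]
    ext x; simp [pairFace]; tauto

lemma Isets_eq_image_pairFace : Isets n = (lePairs n).image (pairFace σ) := by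
  ext S
  refine ⟨fun hS => ?_, fun hS => ?_⟩
  · obtain ⟨p, rfl⟩ := exists_pairFace_eq σ hS
    rcases le_total p.1 p.2 with h | h
    · exact mem_image_of_mem _ (by simpa [lePairs] using h)
    · exact pairFace_swap σ p ▸ mem_image_of_mem _ (by simpa [lePairs] using h)
  · obtain ⟨p, -, rfl⟩ := mem_image.1 hS
    exact pairFace_mem_Isets σ p

lemma Qbar_eq_sum_pairFace : Qbar n = ∑ p ∈ lePairs n, simplexFace n (pairFace σ p) := by
  rw [Qbar, Isets_eq_image_pairFace σ, sum_image (pairFace_injOn σ)]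

end pairFace

section tauVertex

variable {n : ℕ} (σ : Equiv.Perm (Fin n)) (i : ℕ)

-- `v : Fin n` stands for the value `v + 1`, so `i ≤ v` means `v + 1 > i`.
def tauVertex (v : Fin n) : Fin (n + 1) := if i ≤ v then (σ v).castSucc else Fin.last n

lemma tauVertex_mem_pairFace (p : Fin n × Fin n) : tauVertex σ i p.2 ∈ pairFace σ p := by
  unfold tauVertex
  split_ifs <;> simp [pairFace]

lemma sum_single_tauVertex_apply_castSucc (k : Fin n) :
    (∑ v : Fin n, ((v : ℕ) + 1) • Pi.single (tauVertex σ i v) 1 : Fin (n + 1) → ℝ) k.castSucc =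
      if i ≤ σ.symm k then ((σ.symm k : ℕ) : ℝ) + 1 else 0 := by
  rw [Finset.sum_apply, Finset.sum_eq_single (σ.symm k)]
  · by_cases h : i ≤ σ.symm k <;> simp [tauVertex, h]
  · intro v _ hv
    have hvk : σ v ≠ k := fun h => hv (σ.eq_symm_apply.2 h)
    by_cases h : i ≤ v <;> simp [tauVertex, h, hvk]
  · simp

lemma sum_single_tauVertex_apply_last (hi : i ≤ n) :
    (∑ v : Fin n, ((v : ℕ) + 1) • Pi.single (tauVertex σ i v) 1 : Fin (n + 1) → ℝ) (Fin.last n) =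
      (((i + 1).choose 2 : ℕ) : ℝ) := by
  have hterm (v : Fin n) : (((v : ℕ) + 1) • Pi.single (tauVertex σ i v) 1 : Fin (n + 1) → ℝ)
      (Fin.last n) = if (v : ℕ) < i then ((v : ℕ) + 1 : ℝ) else 0 := by
    by_cases h : i ≤ v
    · simp [tauVertex, h, (Fin.castSucc_lt_last _).ne, not_lt.2 h]
    · simp [tauVertex, h, lt_of_not_ge h]
  rw [Finset.sum_apply]
  simp only [hterm]
  rw [Fin.sum_univ_eq_sum_range (fun k => if k < i then (k + 1 : ℝ) else 0), ← sum_filter,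
    show (range n).filter (· < i) = range i by ext; simp; omega,
    ← sum_range_add_one_eq_choose_two]
  push_cast
  rfl

end tauVertex

/-- For `0 ≤ i ≤ n` and `π ∈ S_n`, the point `τ_i(π)`, whose `j`-th coordinate (`j ≤ n`) is
`π(j)` if `π(j) > i` and `0` otherwise, and whose last coordinate is `C(i+1,2)`, lies in
`Q̄_n`. -/
theorem tau_mem_Qbar (n i : ℕ) (hi : i ≤ n) (π : Equiv.Perm (Fin n)) :
    (fun j : Fin (n + 1) =>
      if h : (j : ℕ) < n then
        (if i < ((π ⟨(j : ℕ), h⟩ : Fin n) : ℕ) + 1 then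
          (((π ⟨(j : ℕ), h⟩ : Fin n) : ℕ) : ℝ) + 1
        else 0)
      else (((i + 1).choose 2 : ℕ) : ℝ)) ∈ Qbar n := by
  have hmem := sum_single_mem_sum_simplexFace (lePairs n) (pairFace π.symm)
    (fun p => tauVertex π.symm i p.2) fun p _ => tauVertex_mem_pairFace π.symm i p
  rw [← Qbar_eq_sum_pairFace, sum_lePairs_snd fun v => Pi.single (tauVertex π.symm i v) 1] at hmem
  convert hmem using 1
  funext j
  induction j using Fin.lastCases with
  | last => simpa using (sum_single_tauVertex_apply_last π.symm i hi).symm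
  | cast k =>
    rw [sum_single_tauVertex_apply_castSucc, Equiv.symm_symm]
    simp
end

section
/- For any two distinct subsets I_1, I_2 ⊆ [m] with |I_1 \ I_2| > 0 and |I_2 \ I_1| > 0, there is no point x ∈ ℝ^m simultaneously satisfying Σ_{i∈I_1} x_i = C(|I_1|,2), Σ_{i∈I_2} x_i = C(|I_2|,2), Σ_{i∈I_1∪I_2} x_i ≥ C(|I_1∪I_2|,2), and Σ_{i∈I_1∩I_2} x_i ≥ C(|I_1∩I_2|,2). -/
/-!
`C(n,2)` is strictly supermodular: `C(u,2) + C(c,2) - C(a,2) - C(b,2) = (a - c)(b - c)` whenever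
`u + c = a + b`. Adding the two lower bounds on the union and the intersection and using
inclusion–exclusion for sums gives `C(|I₁ ∪ I₂|,2) + C(|I₁ ∩ I₂|,2) ≤ C(|I₁|,2) + C(|I₂|,2)`,
while incomparability makes both factors `|I₁| - |I₁ ∩ I₂|` and `|I₂| - |I₁ ∩ I₂|` positive.
-/

open Finset

theorem Nat.choose_two_add_choose_two_lt {a b c u : ℕ} (ha : c < a) (hb : c < b)
    (hu : u + c = a + b) : a.choose 2 + b.choose 2 < u.choose 2 + c.choose 2 := by
  have hu' : (u : ℚ) = a + b - c := by rw [eq_sub_iff_add_eq]; exact_mod_cast hu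
  have ha' : (c : ℚ) + 1 ≤ a := by exact_mod_cast ha
  have hb' : (c : ℚ) + 1 ≤ b := by exact_mod_cast hb
  suffices (a.choose 2 + b.choose 2 : ℚ) < u.choose 2 + c.choose 2 by exact_mod_cast this
  simp only [Nat.cast_choose_two, hu']
  nlinarith [mul_pos (by linarith : (0 : ℚ) < a - c) (by linarith : (0 : ℚ) < b - c)]

theorem Finset.choose_two_card_add_lt {α : Type*} [DecidableEq α] {s t : Finset α}
    (hst : (s \ t).Nonempty) (hts : (t \ s).Nonempty) :
    (#s).choose 2 + (#t).choose 2 < (#(s ∪ t)).choose 2 + (#(s ∩ t)).choose 2 := by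
  have hs := card_sdiff_add_card_inter s t
  have ht := card_sdiff_add_card_inter t s
  rw [inter_comm] at ht
  exact Nat.choose_two_add_choose_two_lt (by grind [card_pos]) (by grind [card_pos])
    (card_union_add_card_inter s t)

/-- If `I_1, I_2` are incomparable (both set differences nonempty), no point can satisfy
`Σ_{I_1} x = C(|I_1|,2)`, `Σ_{I_2} x = C(|I_2|,2)`, `Σ_{I_1∪I_2} x ≥ C(|I_1∪I_2|,2)`, and
`Σ_{I_1∩I_2} x ≥ C(|I_1∩I_2|,2)` simultaneously. -/
theorem no_common_point_incomparable {m : ℕ} (I₁ I₂ : Finset (Fin m)) (x : Fin m → ℝ)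
    (h₁ : (I₁ \ I₂).Nonempty) (h₂ : (I₂ \ I₁).Nonempty)
    (e₁ : ∑ i ∈ I₁, x i = ((I₁.card.choose 2 : ℕ) : ℝ))
    (e₂ : ∑ i ∈ I₂, x i = ((I₂.card.choose 2 : ℕ) : ℝ))
    (hu : (((I₁ ∪ I₂).card.choose 2 : ℕ) : ℝ) ≤ ∑ i ∈ I₁ ∪ I₂, x i)
    (hi : (((I₁ ∩ I₂).card.choose 2 : ℕ) : ℝ) ≤ ∑ i ∈ I₁ ∩ I₂, x i) :
    False := by
  have hlt : (((#I₁).choose 2 + (#I₂).choose 2 : ℕ) : ℝ) <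
      ((#(I₁ ∪ I₂)).choose 2 + (#(I₁ ∩ I₂)).choose 2 : ℕ) :=
    Nat.cast_lt.mpr (choose_two_card_add_lt h₁ h₂)
  have hsum := sum_union_inter (s₁ := I₁) (s₂ := I₂) (f := x)
  push_cast at hlt
  linarith
end
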